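/- arXiv:1302.4190 — 9 statements merged into one kernel-verified Lean document; each statement's English description precedes it below -/
import Mathlib

section
/- There exists a Hausdorff paratopological group G such that every singleton of G is a Gδ-set, but G is not submetrizable. -/
open Topology

/-- A witness for the existence of a Hausdorff paratopological group
(a group with a topology making multiplication jointly continuous)
in which every singleton is a `Gδ`-set but which is not submetrizable
(there is no metrizable topology coarser than the given one). -/
structure NonSubmetrizableGdeltaWitness where
  G : Type
  [group : Group G]
  [top : TopologicalSpace G]
  hausdorff : T2Space G
  paratopological : ContinuousMul G
  singletons_Gdelta : ∀ x : G, IsGδ ({x} : Set G)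
  not_submetrizable :
    ¬ ∃ t' : TopologicalSpace G, top ≤ t' ∧ @TopologicalSpace.MetrizableSpace G t'

/-!
Let `A : ι → Set ℕ` be an uncountable maximal almost disjoint family; one exists by Zorn's
lemma, starting from the branches of the binary tree, coded in `ℕ`. On the free abelian group
over `ℕ ⊕ ι`, with generators `y k = single (inl k) 1` and `z i = single (inr i) 1`, declare the
neighbourhoods of `x` to be the sets `x + S`, where `S` is the additive submonoid generated by
the edges `y k - z i` with `k ∈ A i` outside a finite set depending on `i`. Since these are
submonoids, addition is continuous. A homomorphism to `ℤ` that kills such an `S` is locally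
constant, and these separate points; forbidding one index `n` for all `i` gives countably many
neighbourhoods of `0` meeting in `{0}`. Along `A i` the `y k` converge to `z i`, also in any
coarser topology. If that topology were metrizable, the uncountable set of the `z i` would lie
in the separable closure of the `y k`, hence accumulate at some `z i₀`. Picking, for nearby
`z j`, points `y k` with `k ∈ A j \ A i₀` yields a sequence converging to `z i₀` whose index set
misses `A i₀`; by maximality some `A i` meets it infinitely, so `z i = z i₀` although `i ≠ i₀`.
-/

open Filter Set Function Finsupp TopologicalSpace

def IsAlmostDisjoint (C : Set (Set ℕ)) : Prop :=
  (∀ a ∈ C, a.Infinite) ∧ C.Pairwise fun a b => (a ∩ b).Finite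

theorem IsAlmostDisjoint.sUnion_of_isChain {c : Set (Set (Set ℕ))}
    (hc : ∀ C ∈ c, IsAlmostDisjoint C) (hchain : IsChain (· ⊆ ·) c) : IsAlmostDisjoint (⋃₀ c) := by
  constructor
  · rintro a ⟨C, hC, ha⟩
    exact (hc C hC).1 a ha
  · rintro a ⟨C, hC, ha⟩ b ⟨C', hC', hb⟩ hab
    rcases hchain.total hC hC' with h | h
    · exact (hc C' hC').2 (h ha) hb hab
    · exact (hc C hC).2 ha (h hb) hab

theorem IsAlmostDisjoint.insert {C : Set (Set ℕ)} (hC : IsAlmostDisjoint C) {d : Set ℕ}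
    (hd : d.Infinite) (hdC : ∀ a ∈ C, (a ∩ d).Finite) : IsAlmostDisjoint (insert d C) := by
  refine ⟨forall_mem_insert.2 ⟨hd, hC.1⟩, hC.2.insert fun a ha _ => ⟨?_, hdC a ha⟩⟩
  rw [inter_comm]
  exact hdC a ha

theorem exists_infinite_inter_of_maximal {C : Set (Set ℕ)} (hC : Maximal IsAlmostDisjoint C)
    {d : Set ℕ} (hd : d.Infinite) : ∃ a ∈ C, (a ∩ d).Infinite := by
  by_contra! hdC
  have hdmem : d ∈ C := hC.mem_of_prop_insert (hC.prop.insert hd hdC)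
  exact hd (by simpa using hdC d hdmem)

def branch (f : ℕ → Bool) : Set ℕ :=
  range fun n => Encodable.encode ((List.range n).map f)

theorem branch_infinite (f : ℕ → Bool) : (branch f).Infinite :=
  infinite_range_of_injective fun m n h => by
    simpa using congrArg List.length (Encodable.encode_injective h)

theorem branch_inter_finite {f g : ℕ → Bool} (hfg : f ≠ g) : (branch f ∩ branch g).Finite := by
  obtain ⟨m, hm⟩ := Function.ne_iff.1 hfg
  refine ((finite_Iic m).image fun n => Encodable.encode ((List.range n).map f)).subset ?_
  rintro _ ⟨⟨n, rfl⟩, ⟨n', hn'⟩⟩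
  have hprefix := Encodable.encode_injective hn'
  obtain rfl : n = n' := by simpa using congrArg List.length hprefix.symm
  refine ⟨n, mem_Iic.2 (not_lt.1 fun hmn => hm ?_), rfl⟩
  exact (List.map_inj_left.1 hprefix m (List.mem_range.2 hmn)).symm

theorem isAlmostDisjoint_range_branch : IsAlmostDisjoint (range branch) := by
  refine ⟨forall_mem_range.2 branch_infinite, ?_⟩
  rintro _ ⟨f, rfl⟩ _ ⟨g, rfl⟩ hfg
  exact branch_inter_finite fun h => hfg (h ▸ rfl)

theorem branch_injective : Injective branch := by
  intro f g hfg
  by_contra h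
  exact branch_infinite f (by simpa [hfg] using branch_inter_finite h)

instance : Uncountable (ℕ → Bool) :=
  uncountable_iff_forall_not_surjective.2 fun F hF => by
    obtain ⟨n, hn⟩ := hF fun n => !F n n
    simpa using congrFun hn n

theorem exists_maximal_isAlmostDisjoint_uncountable :
    ∃ C : Set (Set ℕ), Maximal IsAlmostDisjoint C ∧ Uncountable C := by
  obtain ⟨C, hbranch, hC⟩ := zorn_subset_nonempty {C | IsAlmostDisjoint C}
    (fun c hc hchain _ => ⟨⋃₀ c, IsAlmostDisjoint.sUnion_of_isChain hc hchain,
      fun _ => subset_sUnion_of_mem⟩) _ isAlmostDisjoint_range_branch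
  exact ⟨C, hC, ((injective_codRestrict fun f => hbranch (mem_range_self f)).2
    branch_injective).uncountable⟩

section TranslationTopology

variable {M : Type*} [AddCommMonoid M]

abbrev translationTopology (F : Filter M) : TopologicalSpace M :=
  .mkOfNhds fun x => map (x + ·) F

theorem nhds_translationTopology {F : Filter M} (h0 : pure 0 ≤ F)
    (hadd : Tendsto (uncurry (· + ·)) (F ×ˢ F) F) (x : M) :
    @nhds M (translationTopology F) x = map (x + ·) F := by
  refine TopologicalSpace.nhds_mkOfNhds _ x (fun y => by simpa using map_mono (m := (y + ·)) h0)
    fun y s hs => ?_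
  obtain ⟨u, hu, v, hv, huv⟩ := mem_prod_iff.1 (hadd hs)
  filter_upwards [image_mem_map hu]
  rintro _ ⟨a, ha, rfl⟩
  exact mem_map.2 <| mem_of_superset hv fun b hb => by
    simpa [add_assoc] using huv (mk_mem_prod ha hb)

variable [TopologicalSpace M] {F : Filter M}

theorem continuousAdd_of_nhds_eq_map (hadd : Tendsto (uncurry (· + ·)) (F ×ˢ F) F)
    (hnhds : ∀ x, 𝓝 x = map (x + ·) F) : ContinuousAdd M := by
  have h0 : 𝓝 (0 : M) = F := by simpa using hnhds 0
  exact continuousAdd_of_comm_of_nhds_zero M (h0 ▸ hadd) (h0 ▸ hnhds)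

theorem continuous_of_mker_mem {N Φ : Type*} [AddCommMonoid N] [TopologicalSpace N]
    [DiscreteTopology N] [FunLike Φ M N] [AddMonoidHomClass Φ M N]
    (hnhds : ∀ x, 𝓝 x = map (x + ·) F) (φ : Φ)
    (hφ : (AddMonoidHom.mker φ : Set M) ∈ F) : Continuous φ := by
  refine continuous_iff_continuousAt.2 fun x => ?_
  rw [ContinuousAt, hnhds, nhds_discrete, tendsto_map'_iff, tendsto_pure]
  filter_upwards [hφ] with g hg
  simp [(AddMonoidHom.mem_mker).1 hg]

end TranslationTopology

theorem exists_accPt_of_isSeparable {X : Type*} [TopologicalSpace X] [PseudoMetrizableSpace X]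
    {s : Set X} (hs : IsSeparable s) (hunc : ¬ s.Countable) : ∃ x ∈ s, AccPt x (𝓟 s) := by
  by_contra! h
  have := discreteTopology_of_noAccPts h
  have := hs.secondCountableTopology
  exact hunc (countable_coe_iff.1 countable_of_Lindelof_of_discrete)

section AlmostDisjointLimits

variable {X ι : Type*} [TopologicalSpace X] {A : ι → Set ℕ} {y : ℕ → X} {z : ι → X}

theorem exists_eq_of_tendsto_comp [T2Space X]
    (hmax : ∀ D : Set ℕ, D.Infinite → ∃ i, (A i ∩ D).Infinite)
    (hyz : ∀ i, Tendsto y (cofinite ⊓ 𝓟 (A i)) (𝓝 (z i))) {k : ℕ → ℕ}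
    (hk : Tendsto k atTop atTop) {x : X} (hx : Tendsto (y ∘ k) atTop (𝓝 x)) :
    ∃ i, z i = x ∧ (A i ∩ range k).Infinite := by
  obtain ⟨i, hi⟩ := hmax _ (infinite_of_not_bddAbove (not_bddAbove_of_tendsto_atTop hk))
  have hI : (k ⁻¹' A i).Infinite := fun hfin =>
    hi ((hfin.image k).subset (by rintro _ ⟨hA, n, rfl⟩; exact ⟨n, hA, rfl⟩))
  have : (atTop ⊓ 𝓟 (k ⁻¹' A i)).NeBot :=
    frequently_iff_neBot.1 (Nat.frequently_atTop_iff_infinite.2 hI)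
  have hk' : Tendsto k (atTop ⊓ 𝓟 (k ⁻¹' A i)) (cofinite ⊓ 𝓟 (A i)) :=
    tendsto_inf.2 ⟨by rw [Nat.cofinite_eq_atTop]; exact hk.mono_left inf_le_left,
      tendsto_principal.2 (mem_inf_of_right (mem_principal_self _))⟩
  exact ⟨i, tendsto_nhds_unique ((hyz i).comp hk') (hx.mono_left inf_le_left), hi⟩

theorem exists_tendsto_comp_of_accPt [FirstCountableTopology X] (hinf : ∀ i, (A i).Infinite)
    (hAD : Pairwise fun i j => (A i ∩ A j).Finite)
    (hyz : ∀ i, Tendsto y (cofinite ⊓ 𝓟 (A i)) (𝓝 (z i))) {i₀ : ι}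
    (hacc : AccPt (z i₀) (𝓟 (range z))) :
    ∃ k : ℕ → ℕ, Tendsto k atTop atTop ∧ (∀ n, k n ∉ A i₀) ∧
      Tendsto (y ∘ k) atTop (𝓝 (z i₀)) := by
  obtain ⟨U, hU, hbasis⟩ := (nhds_basis_opens (z i₀)).exists_antitone_subbasis
  have key : ∀ n, ∃ m, n ≤ m ∧ m ∉ A i₀ ∧ y m ∈ U n := by
    intro n
    obtain ⟨_, ⟨hne, j, rfl⟩, hjU⟩ :=
      ((accPt_iff_frequently.1 hacc).and_eventually (hbasis.mem n)).exists
    have := (hinf j).cofinite_inf_principal_neBot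
    have hnear : ∀ᶠ m in cofinite ⊓ 𝓟 (A j), y m ∈ U n := hyz j ((hU n).2.mem_nhds hjU)
    have hfar : ∀ᶠ m in cofinite ⊓ 𝓟 (A j), m ∉ A i₀ :=
      mem_of_superset (inter_mem_inf (hAD fun h => hne (congrArg z h)).compl_mem_cofinite
        (mem_principal_self _)) fun m hm hmi => hm.1 ⟨hm.2, hmi⟩
    have hlarge : ∀ᶠ m in cofinite ⊓ 𝓟 (A j), n ≤ m :=
      mem_inf_of_left (Nat.cofinite_eq_atTop ▸ eventually_ge_atTop n)
    exact (hlarge.and (hfar.and hnear)).exists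
  choose k hk using key
  exact ⟨k, tendsto_atTop_mono (fun n => (hk n).1) tendsto_id, fun n => (hk n).2.1,
    hbasis.tendsto fun n => (hk n).2.2⟩

theorem not_metrizableSpace_of_tendsto [Uncountable ι] (hinf : ∀ i, (A i).Infinite)
    (hAD : Pairwise fun i j => (A i ∩ A j).Finite)
    (hmax : ∀ D : Set ℕ, D.Infinite → ∃ i, (A i ∩ D).Infinite) (hz : Injective z)
    (hyz : ∀ i, Tendsto y (cofinite ⊓ 𝓟 (A i)) (𝓝 (z i))) : ¬ MetrizableSpace X := by
  intro hX
  have hzy : range z ⊆ closure (range y) := range_subset_iff.2 fun i =>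
    have := (hinf i).cofinite_inf_principal_neBot
    mem_closure_of_tendsto (hyz i) (Eventually.of_forall mem_range_self)
  have hunc : ¬ (range z).Countable := fun h => not_countable_univ (by simpa using h.preimage hz)
  obtain ⟨_, ⟨i₀, rfl⟩, hacc⟩ :=
    exists_accPt_of_isSeparable ((countable_range y).isSeparable.closure.mono hzy) hunc
  obtain ⟨k, hk, hkA, hyk⟩ := exists_tendsto_comp_of_accPt hinf hAD hyz hacc
  obtain ⟨i, hi, hik⟩ := exists_eq_of_tendsto_comp hmax hyz hk hyk
  obtain ⟨_, hA, n, rfl⟩ := hik.nonempty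
  exact hkA n (hz hi ▸ hA)

end AlmostDisjointLimits

theorem isGδ_singleton_of_iInter_nhds {X : Type*} [TopologicalSpace X] {x : X} {U : ℕ → Set X}
    (hU : ∀ n, U n ∈ 𝓝 x) (hUx : ⋂ n, U n ⊆ {x}) : IsGδ {x} := by
  convert IsGδ.iInter_of_isOpen fun n => isOpen_interior (s := U n)
  refine Subset.antisymm (fun y hy => ?_) ((iInter_mono fun n => interior_subset).trans hUx)
  rw [mem_singleton_iff.1 hy]
  exact mem_iInter.2 fun n => mem_interior_iff_mem_nhds.2 (hU n)

theorem AddSubmonoid.eq_zero_of_mem_closure_of_map_eq_zero {M : Type*} [AddCommMonoid M]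
    {s : Set M} (μ : M →+ ℤ) (hμ : ∀ g ∈ s, 0 < μ g) {g : M} (hg : g ∈ closure s)
    (hμg : μ g = 0) : g = 0 := by
  suffices 0 ≤ μ g ∧ (μ g = 0 → g = 0) from this.2 hμg
  clear hμg
  induction hg using closure_induction with
  | mem g hg => exact ⟨(hμ g hg).le, fun h => absurd h (hμ g hg).ne'⟩
  | zero => simp
  | add g h _ _ ihg ihh =>
    refine ⟨by rw [map_add]; linarith [ihg.1, ihh.1], fun hgh => ?_⟩
    rw [map_add] at hgh
    rw [ihg.2 (by linarith [ihg.1, ihh.1]), ihh.2 (by linarith [ihg.1, ihh.1]), add_zero]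

section PsiGroup

variable {ι : Type*} (A : ι → Set ℕ)

def psiEdges (E : ι → Set ℕ) : Set (ℕ ⊕ ι →₀ ℤ) :=
  {g | ∃ i, ∃ k ∈ A i \ E i, g = single (Sum.inl k) 1 - single (Sum.inr i) 1}

def psiFilter : Filter (ℕ ⊕ ι →₀ ℤ) :=
  ⨅ (E : ι → Set ℕ) (_ : ∀ i, (E i).Finite), 𝓟 (AddSubmonoid.closure (psiEdges A E))

variable {A}

theorem closure_psiEdges_mem_psiFilter {E : ι → Set ℕ} (hE : ∀ i, (E i).Finite) :
    (AddSubmonoid.closure (psiEdges A E) : Set (ℕ ⊕ ι →₀ ℤ)) ∈ psiFilter A :=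
  mem_iInf_of_mem E <| mem_iInf_of_mem hE <| mem_principal_self _

variable (A) in
theorem pure_le_psiFilter : pure 0 ≤ psiFilter A :=
  le_iInf₂ fun _ _ => (pure_le_principal _).2 (zero_mem _)

variable (A) in
theorem tendsto_add_psiFilter :
    Tendsto (uncurry (· + ·)) (psiFilter A ×ˢ psiFilter A) (psiFilter A) :=
  tendsto_iInf.2 fun _ => tendsto_iInf.2 fun hE => tendsto_principal.2 <|
    mem_of_superset (prod_mem_prod (closure_psiEdges_mem_psiFilter hE)
      (closure_psiEdges_mem_psiFilter hE)) fun _ hp => add_mem hp.1 hp.2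

theorem psiEdges_subset_mker_applyAddHom (n : ℕ) :
    psiEdges A (fun _ => {n}) ⊆
      AddMonoidHom.mker (applyAddHom (M := ℤ) (Sum.inl n : ℕ ⊕ ι)) := by
  rintro _ ⟨i, k, hk, rfl⟩
  simp [Ne.symm hk.2]

theorem exists_psiEdges_subset_mker_ne_zero (hAD : Pairwise fun i j => (A i ∩ A j).Finite)
    {d : ℕ ⊕ ι →₀ ℤ} (hd : d ≠ 0) :
    ∃ E : ι → Set ℕ, (∀ i, (E i).Finite) ∧
      ∃ φ : (ℕ ⊕ ι →₀ ℤ) →+ ℤ, psiEdges A E ⊆ AddMonoidHom.mker φ ∧ φ d ≠ 0 := by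
  classical
  by_cases hinl : ∃ n, d (Sum.inl n) ≠ 0
  · obtain ⟨n, hn⟩ := hinl
    exact ⟨fun _ => {n}, fun _ => finite_singleton n, _, psiEdges_subset_mker_applyAddHom n, hn⟩
  obtain ⟨i₀, hi₀⟩ : ∃ i, d (Sum.inr i) ≠ 0 := by
    by_contra! hinr
    simp only [not_exists, not_not] at hinl
    exact hd (Finsupp.ext (Sum.forall.2 ⟨hinl, hinr⟩))
  -- Once the finite sets `A i ∩ A i₀` are removed, `w` agrees at both ends of every edge.
  let w : ℕ ⊕ ι → ℤ := Sum.elim ((A i₀).indicator 1) (Pi.single i₀ 1)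
  refine ⟨fun i => if i = i₀ then ∅ else A i ∩ A i₀, fun i => ?_,
    (linearCombination ℤ w).toAddMonoidHom, ?_, ?_⟩
  · by_cases h : i = i₀
    · simp [h]
    · simpa [h] using hAD h
  · rintro _ ⟨i, k, ⟨hki, hkE⟩, rfl⟩
    by_cases h : i = i₀
    · subst h
      simp [w, hki]
    · have : k ∉ A i₀ := fun hk => by simp [h, hki, hk] at hkE
      simp [w, h, this]
  · simp only [not_exists, not_not] at hinl
    simp only [LinearMap.toAddMonoidHom_coe, linearCombination_apply]
    rw [Finsupp.sum_eq_single (Sum.inr i₀) (fun a _ ha => ?_) (by simp)]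
    · simpa [w] using hi₀
    · rcases a with k | i
      · simp [hinl k]
      · simp [w, show i ≠ i₀ from fun h => ha (h ▸ rfl)]

theorem eq_zero_of_mem_closure_psiEdges {E : ι → Set ℕ} {g : ℕ ⊕ ι →₀ ℤ}
    (hg : g ∈ AddSubmonoid.closure (psiEdges A E)) (hinl : ∀ n, g (Sum.inl n) = 0) : g = 0 := by
  let μ := (linearCombination ℤ (Sum.elim 1 0 : ℕ ⊕ ι → ℤ)).toAddMonoidHom
  refine AddSubmonoid.eq_zero_of_mem_closure_of_map_eq_zero μ
    (by rintro _ ⟨i, k, -, rfl⟩; simp [μ]) hg ?_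
  simp only [μ, LinearMap.toAddMonoidHom_coe, linearCombination_apply]
  refine Finset.sum_eq_zero fun a _ => ?_
  rcases a with k | i <;> simp [hinl]

variable [τ : TopologicalSpace (ℕ ⊕ ι →₀ ℤ)] (hnhds : ∀ x, 𝓝 x = map (x + ·) (psiFilter A))
include hnhds

theorem t2Space_psi (hAD : Pairwise fun i j => (A i ∩ A j).Finite) :
    T2Space (ℕ ⊕ ι →₀ ℤ) := by
  refine (t2Space_iff _).2 fun x y hxy => ?_
  obtain ⟨E, hE, φ, hφ, hne⟩ := exists_psiEdges_subset_mker_ne_zero hAD (sub_ne_zero.2 hxy)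
  refine separated_by_continuous (f := φ) (continuous_of_mker_mem hnhds φ ?_) ?_
  · exact mem_of_superset (closure_psiEdges_mem_psiFilter hE) (AddSubmonoid.closure_le.2 hφ)
  · rwa [map_sub, sub_ne_zero] at hne

theorem isGδ_singleton_psi (x : ℕ ⊕ ι →₀ ℤ) : IsGδ {x} := by
  let S n : Set (ℕ ⊕ ι →₀ ℤ) := AddSubmonoid.closure (psiEdges A fun _ => {n})
  refine isGδ_singleton_of_iInter_nhds (U := fun n => {y | y - x ∈ S n}) (fun n => ?_) ?_
  · rw [hnhds]
    simpa [S] using closure_psiEdges_mem_psiFilter fun _ => finite_singleton n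
  · intro y hy
    simp only [mem_iInter, mem_ofPred_eq] at hy
    refine sub_eq_zero.1 (eq_zero_of_mem_closure_psiEdges (hy 0) fun n => ?_)
    exact AddSubmonoid.closure_le.2 (psiEdges_subset_mker_applyAddHom n) (hy n)

theorem tendsto_single_inl_psi (i : ι) :
    Tendsto (fun k => single (Sum.inl k) (1 : ℤ)) (cofinite ⊓ 𝓟 (A i))
      (𝓝 (single (Sum.inr i) 1)) := by
  rw [hnhds]
  refine (tendsto_map.comp (f := fun k => single (Sum.inl k) 1 - single (Sum.inr i) 1) ?_).congr
    fun k => add_sub_cancel _ _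
  refine tendsto_iInf.2 fun E => tendsto_iInf.2 fun hE => tendsto_principal.2 ?_
  filter_upwards [inter_mem_inf (hE i).compl_mem_cofinite (mem_principal_self (A i))]
    with k ⟨hkE, hkA⟩
  exact AddSubmonoid.subset_closure ⟨i, k, ⟨hkA, hkE⟩, rfl⟩

theorem not_exists_metrizable_coarser_psi [Uncountable ι] (hinf : ∀ i, (A i).Infinite)
    (hAD : Pairwise fun i j => (A i ∩ A j).Finite)
    (hmax : ∀ D : Set ℕ, D.Infinite → ∃ i, (A i ∩ D).Infinite) :
    ¬ ∃ t : TopologicalSpace (ℕ ⊕ ι →₀ ℤ), τ ≤ t ∧ @MetrizableSpace _ t := by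
  rintro ⟨t, hle, ht⟩
  exact @not_metrizableSpace_of_tendsto _ _ t A _ _ _ hinf hAD hmax
    ((single_left_injective one_ne_zero).comp Sum.inr_injective)
    (fun i => (tendsto_single_inl_psi (τ := τ) hnhds i).mono_right (nhds_mono hle)) ht

end PsiGroup

/-- There exists a Hausdorff paratopological group `G` such that every singleton
of `G` is a `Gδ`-set, but `G` is not submetrizable. -/
theorem exists_hausdorff_paratopological_group_Gdelta_points_not_submetrizable :
    Nonempty NonSubmetrizableGdeltaWitness := by
  obtain ⟨C, hC, _⟩ := exists_maximal_isAlmostDisjoint_uncountable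
  let A : C → Set ℕ := Subtype.val
  have hinf (i : C) : (A i).Infinite := hC.prop.1 i i.2
  have hAD : Pairwise fun i j => (A i ∩ A j).Finite := hC.prop.2.subtype
  have hmax (D : Set ℕ) (hD : D.Infinite) : ∃ i, (A i ∩ D).Infinite :=
    let ⟨a, ha, h⟩ := exists_infinite_inter_of_maximal hC hD
    ⟨⟨a, ha⟩, h⟩
  let _ := translationTopology (psiFilter A)
  have hnhds := nhds_translationTopology (pure_le_psiFilter A) (tendsto_add_psiFilter A)
  have := continuousAdd_of_nhds_eq_map (tendsto_add_psiFilter A) hnhds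
  exact ⟨{ G := Multiplicative (ℕ ⊕ C →₀ ℤ)
           hausdorff := t2Space_psi hnhds hAD
           paratopological := ⟨continuous_add (M := ℕ ⊕ C →₀ ℤ)⟩
           singletons_Gdelta := isGδ_singleton_psi hnhds
           not_submetrizable := not_exists_metrizable_coarser_psi hnhds hinf hAD hmax }⟩
end

section
/- If G is a regular T1 ω-narrow first-countable paratopological group, then there exists a continuous bijection from G onto a second-countable Hausdorff topological space. -/
open Topology Pointwise

/-- If `G` is a regular T1 ω-narrow first-countable paratopological group, then there
exists a continuous bijection from `G` onto a second-countable Hausdorff space. -/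
theorem omegaNarrow_firstCountable_condenses_onto_secondCountable
    {G : Type*} [Group G] [TopologicalSpace G] [ContinuousMul G]
    [RegularSpace G] [T1Space G] [FirstCountableTopology G]
    (hnarrow : ∀ U ∈ 𝓝 (1 : G), ∃ F : Set G, F.Countable ∧
      (Set.univ : Set G) ⊆ F * U ∧ (Set.univ : Set G) ⊆ U * F) :
    ∃ (H : Type*) (tH : TopologicalSpace H) (f : G → H),
      @SecondCountableTopology H tH ∧ @T2Space H tH ∧
      @Continuous G H _ tH f ∧ Function.Bijective f := by
  classical
  -- countable antitone basis of `𝓝 1`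
  obtain ⟨U, hU⟩ := (𝓝 (1 : G)).exists_antitone_basis
  -- regular shrinking: open `V m` with `closure (V m) ⊆ U m`
  have hV : ∀ m : ℕ, ∃ V : Set G, IsOpen V ∧ (1 : G) ∈ V ∧ closure V ⊆ U m := by
    intro m
    obtain ⟨C, hCmem, hCclosed, hCsub⟩ :=
      exists_mem_nhds_isClosed_subset (hU.mem m)
    exact ⟨interior C, isOpen_interior, mem_interior_iff_mem_nhds.2 hCmem,
      (closure_minimal interior_subset hCclosed).trans hCsub⟩
  choose V hVopen hV1 hVcl using hV
  have hVnhds : ∀ m, V m ∈ 𝓝 (1 : G) := fun m => (hVopen m).mem_nhds (hV1 m)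
  choose F hFc hFl _hFr using fun m => hnarrow (V m) (hVnhds m)
  -- the left translate of a set `s` by `d`, as a preimage
  let T : G → Set G → Set G := fun d s => (fun x => d⁻¹ * x) ⁻¹' s
  have hTopen : ∀ (d : G) (s : Set G), IsOpen s → IsOpen (T d s) := fun d s hs =>
    hs.preimage (continuous_const.mul continuous_id)
  have hTclosed : ∀ (d : G) (s : Set G), IsClosed s → IsClosed (T d s) := fun d s hs =>
    hs.preimage (continuous_const.mul continuous_id)
  -- the countable subbase
  let S : Set (Set G) :=
    (⋃ m : ℕ, (fun d => T d (V m)) '' F m) ∪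
      (⋃ m : ℕ, (fun d => (T d (closure (V m)))ᶜ) '' F m)
  have hScount : S.Countable :=
    ((Set.countable_iUnion fun m => (hFc m).image _).union
      (Set.countable_iUnion fun m => (hFc m).image _))
  -- every member of `S` is open in the original topology
  have hSopen : ∀ s ∈ S, IsOpen s := by
    rintro s (hs | hs) <;> simp only [Set.mem_iUnion, Set.mem_image] at hs <;>
      obtain ⟨m, d, hd, rfl⟩ := hs
    · exact hTopen d (V m) (hVopen m)
    · exact (hTclosed d (closure (V m)) isClosed_closure).isOpen_compl
  -- key separation lemma
  have hsep : ∀ x y : G, x ≠ y → ∃ m : ℕ, ∃ d ∈ F m,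
      x ∈ T d (V m) ∧ y ∉ T d (closure (V m)) := by
    intro x y hxy
    set g : G := x⁻¹ * y with hg
    have hg1 : g ≠ 1 := by
      rw [hg, Ne, inv_mul_eq_one]; exact hxy
    have hgne : (1 : G) ≠ g⁻¹ := fun h => hg1 (inv_eq_one.mp h.symm)
    obtain ⟨W1, W2, hW1o, hW2o, h1W1, hgW2, hdisj⟩ := t2_separation hgne
    -- `W2' = {z | z * g⁻¹ ∈ W2}` is an open neighborhood of 1
    have hW2'o : IsOpen ((fun z : G => z * g⁻¹) ⁻¹' W2) :=
      hW2o.preimage (continuous_id.mul continuous_const)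
    have h1W2' : (1 : G) ∈ (fun z : G => z * g⁻¹) ⁻¹' W2 := by
      simpa using hgW2
    have hmem : W1 ∩ ((fun z : G => z * g⁻¹) ⁻¹' W2) ∈ 𝓝 (1 : G) :=
      Filter.inter_mem (hW1o.mem_nhds h1W1) (hW2'o.mem_nhds h1W2')
    obtain ⟨m, -, hsub⟩ := hU.1.mem_iff.1 hmem
    -- cover `x` at scale `m`
    obtain ⟨d, hd, v, hv, hdv⟩ := hFl m (Set.mem_univ x)
    have hxT : x ∈ T d (V m) := by
      show d⁻¹ * x ∈ V m
      rw [← hdv]; simpa using hv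
    refine ⟨m, d, hd, hxT, fun hyT => ?_⟩
    -- if `y ∈ d • closure (V m)`, derive a contradiction
    have ha : d⁻¹ * x ∈ V m := hxT
    have hc : d⁻¹ * y ∈ closure (V m) := hyT
    have haU : d⁻¹ * x ∈ U m := (hVcl m) (subset_closure ha)
    have hcU : d⁻¹ * y ∈ U m := (hVcl m) hc
    have haW1 : d⁻¹ * x ∈ W1 := (hsub haU).1
    have hcW2' : d⁻¹ * y ∈ (fun z : G => z * g⁻¹) ⁻¹' W2 := (hsub hcU).2
    have heq : (d⁻¹ * y) * g⁻¹ = d⁻¹ * x := by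
      rw [hg]; group
    have haW2 : d⁻¹ * x ∈ W2 := by
      have := hcW2'
      simpa [heq] using this
    exact (Set.disjoint_left.1 hdisj haW1) haW2
  -- second countability and Hausdorffness of the generated topology on `G`
  have hSC : @SecondCountableTopology G (.generateFrom S) := by
    letI := TopologicalSpace.generateFrom S
    exact (TopologicalSpace.isTopologicalBasis_of_subbasis rfl).secondCountableTopology
      ((Set.countable_setOf_finite_subset hScount).image _)
  have hT2 : @T2Space G (.generateFrom S) := by
    refine @T2Space.mk _ (.generateFrom S) fun x y hxy => ?_
    obtain ⟨m, d, hd, hx, hy⟩ := hsep x y hxy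
    have hsS1 : T d (V m) ∈ S :=
      Or.inl (Set.mem_iUnion.2 ⟨m, Set.mem_image_of_mem _ hd⟩)
    have hsS2 : (T d (closure (V m)))ᶜ ∈ S :=
      Or.inr (Set.mem_iUnion.2 ⟨m, Set.mem_image_of_mem _ hd⟩)
    have hdj : Disjoint (T d (V m)) (T d (closure (V m)))ᶜ :=
      Set.disjoint_left.2 fun z hz hz' => hz' (Set.preimage_mono subset_closure hz)
    exact ⟨_, _, TopologicalSpace.isOpen_generateFrom_of_mem hsS1,
      TopologicalSpace.isOpen_generateFrom_of_mem hsS2, hx, Set.mem_compl hy, hdj⟩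
  have hcontid : @Continuous G G _ (.generateFrom S) id :=
    continuous_generateFrom_iff.2 fun s hs => by simpa using hSopen s hs
  -- shrink `G` to a type in the right universe via `ℕ → Prop`
  have hScountable : Countable ↥S := hScount.to_subtype
  obtain ⟨enc, henc⟩ := Countable.exists_injective_nat ↥S
  set ψ : G → (ℕ → Prop) := fun x n => ∃ s : ↥S, enc s = n ∧ x ∈ (s : Set G) with hψdef
  have hψ : Function.Injective ψ := by
    intro x y h
    by_contra hxy
    obtain ⟨m, d, hd, hx, hy⟩ := hsep x y hxy
    have hsS : T d (V m) ∈ S := Or.inl (Set.mem_iUnion.2 ⟨m, Set.mem_image_of_mem _ hd⟩)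
    have hx' : ψ x (enc ⟨_, hsS⟩) := ⟨⟨_, hsS⟩, rfl, hx⟩
    have hy' : ψ y (enc ⟨_, hsS⟩) := by rw [← h]; exact hx'
    obtain ⟨s', hs', hys'⟩ := hy'
    have : s' = ⟨_, hsS⟩ := henc hs'
    rw [this] at hys'
    exact hy (Set.preimage_mono subset_closure hys')
  let φ : G ≃ Set.range ψ := Equiv.ofInjective ψ hψ
  let χ : G ≃ ULift ↥(Set.range ψ) := φ.trans Equiv.ulift.symm
  refine ⟨ULift ↥(Set.range ψ),
    TopologicalSpace.coinduced χ (.generateFrom S), χ, ?_, ?_, ?_, χ.bijective⟩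
  · -- second countable, transported along the homeomorphism `χ`
    letI := TopologicalSpace.generateFrom S
    letI tH := TopologicalSpace.coinduced χ (TopologicalSpace.generateFrom S)
    haveI := hSC
    have hcont : Continuous χ := continuous_coinduced_rng
    have hcontinv : Continuous (χ.symm : ULift ↥(Set.range ψ) → G) := by
      refine continuous_def.2 fun u hu => ?_
      refine isOpen_coinduced.mpr ?_
      have key : χ ⁻¹' ((χ.symm : ULift ↥(Set.range ψ) → G) ⁻¹' u) = u := by
        ext z; simp
      rw [key]; exact hu
    exact (Homeomorph.mk χ hcont hcontinv).symm.secondCountableTopology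
  · -- Hausdorff, transported along the homeomorphism `χ`
    letI := TopologicalSpace.generateFrom S
    letI tH := TopologicalSpace.coinduced χ (TopologicalSpace.generateFrom S)
    haveI := hT2
    have hcont : Continuous χ := continuous_coinduced_rng
    have hcontinv : Continuous (χ.symm : ULift ↥(Set.range ψ) → G) := by
      refine continuous_def.2 fun u hu => ?_
      refine isOpen_coinduced.mpr ?_
      have key : χ ⁻¹' ((χ.symm : ULift ↥(Set.range ψ) → G) ⁻¹' u) = u := by
        ext z; simp
      rw [key]; exact hu
    exact (Homeomorph.mk χ hcont hcontinv).t2Space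
  · -- continuity of `χ` from the original topology
    refine continuous_def.2 fun u hu => ?_
    rw [isOpen_coinduced (f := χ)] at hu
    have := @Continuous.isOpen_preimage G G _ (.generateFrom S) id hcontid _ hu
    simpa using this
end

section
/- If (G, τ) is a Hausdorff first-countable paratopological group which is SIN, then G is submetrizable. -/
/-!
The sets `U U⁻¹`, with `U` ranging over the neighbourhoods of `1`, are a neighbourhood base at `1`
of a group topology coarser than the given one: the SIN property is what makes this family stable
under conjugation and lets `(U U⁻¹)²` be refined by some `W W⁻¹`. If `g ≠ 1`, disjoint
neighbourhoods of `g` and `1` give a `U` with `g ∉ U U⁻¹`, so the new topology is Hausdorff, and it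
is first countable together with the old one. A first-countable Hausdorff topological group is
metrizable (Birkhoff–Kakutani).
-/

open Topology Filter Set Pointwise Uniformity

theorem Set.monotone_mul_inv_self {G : Type*} [Group G] : Monotone fun U : Set G ↦ U * U⁻¹ :=
  fun _ _ h ↦ mul_subset_mul h (inv_subset_inv.2 h)

theorem IsTopologicalGroup.metrizableSpace_of_firstCountableTopology {G : Type*} [Group G]
    [TopologicalSpace G] [IsTopologicalGroup G] [FirstCountableTopology G] [T0Space G] :
    TopologicalSpace.MetrizableSpace G := by
  let := IsTopologicalGroup.rightUniformSpace G
  have : (𝓤 G).IsCountablyGenerated := by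
    rw [uniformity_eq_comap_nhds_one']
    infer_instance
  exact UniformSpace.metrizableSpace

def IsSIN (G : Type*) [Group G] [TopologicalSpace G] : Prop :=
  ∀ U ∈ 𝓝 (1 : G), ∃ V ∈ 𝓝 (1 : G), ∀ x : G, ∀ v ∈ V, x * v * x⁻¹ ∈ U

section SIN

variable {G : Type*} [Group G] [TopologicalSpace G]

theorem IsSIN.exists_nhds_one_conj_mul_inv_subset (hSIN : IsSIN G) {U : Set G} (hU : U ∈ 𝓝 1) :
    ∃ W ∈ 𝓝 (1 : G), ∀ x : G, ∀ g ∈ W * W⁻¹, x * g * x⁻¹ ∈ U * U⁻¹ := by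
  obtain ⟨W, hW, hWU⟩ := hSIN U hU
  refine ⟨W, hW, ?_⟩
  rintro x _ ⟨a, ha, b, hb, rfl⟩
  rw [Set.mem_inv] at hb
  show x * (a * b) * x⁻¹ ∈ _
  have hconj : x * (a * b) * x⁻¹ = (x * a * x⁻¹) * (x * b⁻¹ * x⁻¹)⁻¹ := by group
  exact hconj ▸ mul_mem_mul (hWU x a ha) (inv_mem_inv.2 (hWU x _ hb))

variable [ContinuousMul G]

theorem IsSIN.exists_nhds_one_mul_inv_mul_mul_inv_subset (hSIN : IsSIN G) {U : Set G}
    (hU : U ∈ 𝓝 1) : ∃ W ∈ 𝓝 (1 : G), W * W⁻¹ * (W * W⁻¹) ⊆ U * U⁻¹ := by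
  obtain ⟨V, hV, hVV⟩ := exists_nhds_one_split hU
  obtain ⟨C, hC, hCV⟩ := hSIN V hV
  refine ⟨V ∩ C, inter_mem hV hC, ?_⟩
  rintro _ ⟨_, ⟨a, ha, b, hb, rfl⟩, _, ⟨c, hc, d, hd, rfl⟩, rfl⟩
  rw [Set.mem_inv] at hb hd
  show a * b * (c * d) ∈ _
  -- `a b⁻¹ c d⁻¹ = (a · b⁻¹ c b) (d b)⁻¹`, and `b⁻¹ c b ∈ V` by the SIN property
  have hrw : a * b * (c * d) = (a * (b * c * b⁻¹)) * (d⁻¹ * b⁻¹)⁻¹ := by group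
  rw [hrw]
  exact mul_mem_mul (hVV a ha.1 _ (hCV b c hc.2)) (inv_mem_inv.2 (hVV _ hd.1 _ hb.1))

theorem exists_nhds_one_notMem_mul_inv [T2Space G] {g : G} (hg : g ≠ 1) :
    ∃ U ∈ 𝓝 (1 : G), g ∉ U * U⁻¹ := by
  obtain ⟨A, hA, B, hB, hAB⟩ := Filter.disjoint_iff.1 (disjoint_nhds_nhds.2 hg)
  have hA' : (g * ·) ⁻¹' A ∈ 𝓝 (1 : G) :=
    (continuous_const_mul g).continuousAt.preimage_mem_nhds (by rwa [mul_one])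
  refine ⟨(g * ·) ⁻¹' A ∩ B, inter_mem hA' hB, ?_⟩
  rintro ⟨u, hu, v, hv, huv⟩
  rw [Set.mem_inv] at hv
  have hgv : g * v⁻¹ = u := by rw [← huv]; group
  have hgvA : g * v⁻¹ ∈ A := hv.1
  exact Set.disjoint_left.1 hAB (hgv ▸ hgvA) hu.2

abbrev sinGroupFilterBasis (hSIN : IsSIN G) : GroupFilterBasis G where
  sets := (fun U ↦ U * U⁻¹) '' (𝓝 (1 : G)).sets
  nonempty := ⟨_, mem_image_of_mem _ univ_mem⟩
  inter_sets := by
    rintro _ _ ⟨U, hU, rfl⟩ ⟨V, hV, rfl⟩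
    exact ⟨_, mem_image_of_mem _ (inter_mem hU hV),
      subset_inter (monotone_mul_inv_self inter_subset_left)
        (monotone_mul_inv_self inter_subset_right)⟩
  one' := by
    rintro _ ⟨U, hU, rfl⟩
    exact ⟨1, mem_of_mem_nhds hU, 1, by simpa using mem_of_mem_nhds hU, mul_one 1⟩
  mul' := by
    rintro _ ⟨U, hU, rfl⟩
    obtain ⟨W, hW, hWU⟩ := hSIN.exists_nhds_one_mul_inv_mul_mul_inv_subset hU
    exact ⟨_, mem_image_of_mem _ hW, hWU⟩
  inv' := by
    rintro _ ⟨U, hU, rfl⟩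
    refine ⟨_, mem_image_of_mem _ hU, fun g hg ↦ ?_⟩
    rwa [mem_preimage, ← Set.mem_inv, mul_inv_rev, inv_inv]
  conj' := by
    rintro x _ ⟨U, hU, rfl⟩
    obtain ⟨W, hW, hWU⟩ := hSIN.exists_nhds_one_conj_mul_inv_subset hU
    exact ⟨_, mem_image_of_mem _ hW, hWU x⟩

variable (hSIN : IsSIN G)

theorem sinGroupFilterBasis_nhds_one :
    @nhds G (sinGroupFilterBasis hSIN).topology 1 = (𝓝 1).lift' fun U ↦ U * U⁻¹ := by
  ext s
  rw [GroupFilterBasis.nhds_one_eq, FilterBasis.mem_filter_iff,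
    ((𝓝 1).basis_sets.lift' monotone_mul_inv_self).mem_iff]
  constructor
  · rintro ⟨_, ⟨U, hU, rfl⟩, hs⟩
    exact ⟨U, hU, hs⟩
  · rintro ⟨U, hU, hs⟩
    exact ⟨_, ⟨U, hU, rfl⟩, hs⟩

theorem le_sinGroupFilterBasis_topology :
    ‹TopologicalSpace G› ≤ (sinGroupFilterBasis hSIN).topology := by
  refine le_of_nhds_le_nhds fun x ↦ ?_
  have hx : 𝓝 x = map (x * ·) (𝓝 1) := by simpa using ((Homeomorph.mulLeft x).map_nhds_eq 1).symm
  rw [hx, GroupFilterBasis.nhds_eq, GroupFilterBasis.N, ← GroupFilterBasis.nhds_one_eq,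
    sinGroupFilterBasis_nhds_one]
  refine map_mono (le_lift'.2 fun U hU ↦ mem_of_superset hU (subset_mul_left U ?_))
  simpa using mem_of_mem_nhds hU

theorem sinGroupFilterBasis_firstCountableTopology [FirstCountableTopology G] :
    @FirstCountableTopology G (sinGroupFilterBasis hSIN).topology := by
  obtain ⟨u, hu⟩ := (𝓝 (1 : G)).exists_antitone_basis
  have : (@nhds G (sinGroupFilterBasis hSIN).topology 1).IsCountablyGenerated := by
    rw [sinGroupFilterBasis_nhds_one]
    exact (hu.toHasBasis.lift' monotone_mul_inv_self).isCountablyGenerated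
  refine @FirstCountableTopology.mk G (sinGroupFilterBasis hSIN).topology fun x ↦ ?_
  rw [GroupFilterBasis.nhds_eq, GroupFilterBasis.N, ← GroupFilterBasis.nhds_one_eq]
  infer_instance

theorem sinGroupFilterBasis_t2Space [T2Space G] :
    @T2Space G (sinGroupFilterBasis hSIN).topology := by
  have hsep : ∀ g : G, g ≠ 1 → ∃ U ∈ @nhds G (sinGroupFilterBasis hSIN).topology 1, g ∉ U := by
    intro g hg
    obtain ⟨U, hU, hgU⟩ := exists_nhds_one_notMem_mul_inv hg
    exact ⟨_, sinGroupFilterBasis_nhds_one hSIN ▸ mem_lift' hU, hgU⟩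
  let := (sinGroupFilterBasis hSIN).topology
  exact IsTopologicalGroup.t2Space_of_one_sep hsep

end SIN

/-- If `(G, τ)` is a Hausdorff first-countable paratopological group which is SIN
(for every neighborhood `U` of the identity there is a neighborhood `V` of the
identity with `x * V * x⁻¹ ⊆ U` for all `x`), then `G` is submetrizable, i.e.
there is a metrizable topology on `G` coarser than `τ`. -/
theorem hausdorff_SIN_firstCountable_paratopological_group_submetrizable
    {G : Type*} [Group G] [t : TopologicalSpace G] [T2Space G] [ContinuousMul G]
    [FirstCountableTopology G]
    (hSIN : ∀ U ∈ 𝓝 (1 : G), ∃ V ∈ 𝓝 (1 : G), ∀ x : G, ∀ v ∈ V, x * v * x⁻¹ ∈ U) :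
    ∃ t' : TopologicalSpace G, t ≤ t' ∧ @TopologicalSpace.MetrizableSpace G t' := by
  refine ⟨_, le_sinGroupFilterBasis_topology hSIN, ?_⟩
  have := sinGroupFilterBasis_firstCountableTopology hSIN
  have := sinGroupFilterBasis_t2Space hSIN
  let := (sinGroupFilterBasis hSIN).topology
  exact IsTopologicalGroup.metrizableSpace_of_firstCountableTopology
end

section
/- If (G, τ) is a Hausdorff Abelian first-countable paratopological group, then G is submetrizable. -/
/-!
For a neighbourhood `U` of `1`, the sets `U / U = U U⁻¹` form a neighbourhood base at `1` of a
group topology on `G`: commutativity turns `(V / V) * (V / V)` into `(V * V) / (V * V)`.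
This topology is coarser than `τ` since `U ⊆ U / U`, and first-countable since `τ` is.
It is Hausdorff: if `x = u / v` with `u, v ∈ U` for a small `U`, then `x * v = u` lies both near
`x` and near `1`, which `T2` forbids for `x ≠ 1`. Finally, a Hausdorff topological group whose
neighbourhood filter at `1` is countably generated is metrizable, because so is its uniformity.
-/

open Topology Filter Set Pointwise Uniformity

section Group

variable {G : Type*} [Group G] [TopologicalSpace G]

theorem exists_mem_nhds_one_notMem_div_self [ContinuousMul G] [T2Space G] {x : G} (hx : x ≠ 1) :
    ∃ U ∈ 𝓝 (1 : G), x ∉ U / U := by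
  obtain ⟨A, hA, B, hB, hAB⟩ := Filter.disjoint_iff.1 (disjoint_nhds_nhds.2 hx)
  have hxA : (x * ·) ⁻¹' A ∈ 𝓝 (1 : G) :=
    (continuous_const_mul x).tendsto' 1 x (mul_one x) hA
  refine ⟨(x * ·) ⁻¹' A ∩ B, inter_mem hxA hB, ?_⟩
  rintro ⟨u, ⟨-, huB⟩, v, ⟨hvA, -⟩, rfl⟩
  rw [mem_preimage, div_mul_cancel] at hvA
  exact hAB.notMem_of_mem_left hvA huB

theorem IsTopologicalGroup.metrizableSpace [IsTopologicalGroup G]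
    [(𝓝 (1 : G)).IsCountablyGenerated] [T0Space G] : TopologicalSpace.MetrizableSpace G := by
  let := IsTopologicalGroup.rightUniformSpace G
  have : (𝓤 G).IsCountablyGenerated := by
    rw [uniformity_eq_comap_nhds_one']
    exact Filter.comap.isCountablyGenerated _ _
  exact UniformSpace.metrizableSpace

end Group

section CommGroup

variable (G : Type*) [CommGroup G] [TopologicalSpace G] [ContinuousMul G]

@[reducible]
def nhdsOneDivGroupFilterBasis : GroupFilterBasis G :=
  groupFilterBasisOfComm ((fun U ↦ U / U) '' (𝓝 (1 : G)).sets)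
    ⟨_, mem_image_of_mem _ univ_mem⟩
    (by
      rintro _ _ ⟨U, hU, rfl⟩ ⟨V, hV, rfl⟩
      exact ⟨_, mem_image_of_mem _ (inter_mem hU hV),
        subset_inter (div_subset_div inter_subset_left inter_subset_left)
          (div_subset_div inter_subset_right inter_subset_right)⟩)
    (by
      rintro _ ⟨U, hU, rfl⟩
      exact ⟨1, mem_of_mem_nhds hU, 1, mem_of_mem_nhds hU, div_one 1⟩)
    (by
      rintro _ ⟨U, hU, rfl⟩
      obtain ⟨V, hV, hVU⟩ := exists_nhds_one_split hU
      refine ⟨_, mem_image_of_mem _ hV, ?_⟩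
      rw [div_mul_div_comm]
      exact div_subset_div (mul_subset_iff.2 hVU) (mul_subset_iff.2 hVU))
    (by
      rintro _ ⟨U, hU, rfl⟩
      refine ⟨_, mem_image_of_mem _ hU, fun x hx ↦ ?_⟩
      show x⁻¹ ∈ U / U
      rwa [← Set.mem_inv, inv_div])

variable {G}

theorem le_nhdsOneDivGroupFilterBasis_topology :
    ‹TopologicalSpace G› ≤ (nhdsOneDivGroupFilterBasis G).topology := by
  refine le_of_nhds_le_nhds fun x ↦ ((nhdsOneDivGroupFilterBasis G).nhds_hasBasis x).ge_iff.2 ?_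
  rintro _ ⟨U, hU, rfl⟩
  have hxU : (x⁻¹ * ·) ⁻¹' U ∈ 𝓝 x :=
    (continuous_const_mul x⁻¹).tendsto' x 1 (inv_mul_cancel x) hU
  rw [image_mul_left]
  exact mem_of_superset hxU (preimage_mono (subset_div_left (mem_of_mem_nhds hU)))

theorem nhdsOneDivGroupFilterBasis_filter_hasBasis {ι : Sort*} {p : ι → Prop} {s : ι → Set G}
    (hs : (𝓝 (1 : G)).HasBasis p s) :
    (nhdsOneDivGroupFilterBasis G).filter.HasBasis p (fun i ↦ s i / s i) := by
  refine (nhdsOneDivGroupFilterBasis G).toFilterBasis.hasBasis.to_hasBasis ?_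
    fun i hi ↦ ⟨_, ⟨s i, hs.mem_of_mem hi, rfl⟩, subset_rfl⟩
  rintro _ ⟨U, hU, rfl⟩
  obtain ⟨i, hi, hiU⟩ := hs.mem_iff.1 hU
  exact ⟨i, hi, div_subset_div hiU hiU⟩

theorem isCountablyGenerated_nhds_one_nhdsOneDivGroupFilterBasis_topology
    [(𝓝 (1 : G)).IsCountablyGenerated] :
    (@nhds G (nhdsOneDivGroupFilterBasis G).topology 1).IsCountablyGenerated := by
  obtain ⟨s, hs⟩ := (𝓝 (1 : G)).exists_antitone_basis
  rw [(nhdsOneDivGroupFilterBasis G).nhds_one_eq]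
  exact (nhdsOneDivGroupFilterBasis_filter_hasBasis hs.toHasBasis).isCountablyGenerated

theorem t2Space_nhdsOneDivGroupFilterBasis_topology [T2Space G] :
    @T2Space G (nhdsOneDivGroupFilterBasis G).topology :=
  @IsTopologicalGroup.t2Space_of_one_sep G (nhdsOneDivGroupFilterBasis G).topology _ _
    fun _ hx ↦
      let ⟨U, hU, hxU⟩ := exists_mem_nhds_one_notMem_div_self hx
      ⟨U / U, (nhdsOneDivGroupFilterBasis G).mem_nhds_one ⟨U, hU, rfl⟩, hxU⟩

end CommGroup

/-- If `(G, τ)` is a Hausdorff Abelian first-countable paratopological group,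
then `G` is submetrizable: there is a metrizable topology on `G` coarser than `τ`. -/
theorem hausdorff_abelian_firstCountable_paratopological_group_submetrizable
    {G : Type*} [CommGroup G] [t : TopologicalSpace G] [T2Space G] [ContinuousMul G]
    [FirstCountableTopology G] :
    ∃ t' : TopologicalSpace G, t ≤ t' ∧ @TopologicalSpace.MetrizableSpace G t' := by
  refine ⟨(nhdsOneDivGroupFilterBasis G).topology, le_nhdsOneDivGroupFilterBasis_topology, ?_⟩
  have := isCountablyGenerated_nhds_one_nhdsOneDivGroupFilterBasis_topology (G := G)
  have := t2Space_nhdsOneDivGroupFilterBasis_topology (G := G)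
  exact @IsTopologicalGroup.metrizableSpace G _ (nhdsOneDivGroupFilterBasis G).topology _ _ _
end

section
/- If (G, τ) is a Hausdorff feebly compact first-countable paratopological group, then G is submetrizable. -/
/-!
Let `V n` be a countable base at `1` with `V (n+1) * V (n+1) ⊆ V n`, and put
`W n = closure (V n) ∩ (closure (V n))⁻¹`. These sets are symmetric, satisfy
`W (n+1) * W (n+1) ⊆ W n`, and intersect in `{1}` by the Hausdorff property, so the
entourages `{(x, y) | x⁻¹ * y ∈ W n}` form a countably generated separated uniformity, which
is metrizable. Its topology is coarser than the given one as soon as each `W n` is a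
neighbourhood of `1`, i.e. `(closure N)⁻¹ ∈ 𝓝 1` for `N ∈ 𝓝 1`; this is where feeble
compactness enters.
-/

open Topology Filter Set Uniformity Pointwise

def FeeblyCompactSpace (X : Type*) [TopologicalSpace X] : Prop :=
  ∀ 𝒰 : Set (Set X), (∀ U ∈ 𝒰, IsOpen U ∧ U.Nonempty) →
    LocallyFinite (fun U : 𝒰 => (U : Set X)) → 𝒰.Finite

theorem FeeblyCompactSpace.not_locallyFinite {X : Type*} [TopologicalSpace X]
    (hX : FeeblyCompactSpace X) {O : ℕ → Set X} (hO : ∀ m, IsOpen (O m))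
    (hne : ∀ m, (O m).Nonempty) : ¬ LocallyFinite O := by
  intro hlf
  have : Finite (range O) :=
    (hX _ (forall_mem_range.2 fun m => ⟨hO m, hne m⟩) hlf.on_range).to_subtype
  obtain ⟨⟨_, m, rfl⟩, hfiber⟩ := Finite.exists_infinite_fiber (rangeFactorization O)
  obtain ⟨p, hp⟩ := hne m
  refine (hlf.point_finite p).not_infinite ((infinite_coe_iff.1 hfiber).mono fun k hk => ?_)
  have hk : O k = O m := congrArg Subtype.val hk
  show p ∈ O k
  rwa [hk]

section Group

variable {G : Type*} [Group G]

theorem inter_inv_mul_inter_inv_subset {S T : Set G} (h : S * S ⊆ T) :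
    (S ∩ S⁻¹) * (S ∩ S⁻¹) ⊆ T ∩ T⁻¹ := by
  refine subset_inter ((mul_subset_mul inter_subset_left inter_subset_left).trans h) ?_
  calc (S ∩ S⁻¹) * (S ∩ S⁻¹) ⊆ S⁻¹ * S⁻¹ :=
        mul_subset_mul inter_subset_right inter_subset_right
    _ = (S * S)⁻¹ := (mul_inv_rev S S).symm
    _ ⊆ T⁻¹ := inv_subset_inv.2 h

theorem exists_uniformSpace_hasBasis_inv_mul_mem (W : ℕ → Set G)
    (one_mem : ∀ n, (1 : G) ∈ W n) (inv_subset : ∀ n, (W n)⁻¹ ⊆ W n)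
    (mul_subset : ∀ n, W (n + 1) * W (n + 1) ⊆ W n) :
    ∃ u : UniformSpace G,
      𝓤[u].HasBasis (fun _ => True) fun n => {p : G × G | p.1⁻¹ * p.2 ∈ W n} := by
  have anti : Antitone W := antitone_nat_of_succ_le fun n x hx => by
    simpa using mul_subset n (mul_mem_mul hx (one_mem (n + 1)))
  have hB := (HasAntitoneBasis.iInf_principal anti).toHasBasis.comap
    fun p : G × G => p.1⁻¹ * p.2
  refine ⟨.ofCore (.mk' _ (fun r hr x => ?_) (fun r hr => ?_) (fun r hr => ?_)), hB⟩
  all_goals obtain ⟨n, -, hn⟩ := hB.mem_iff.1 hr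
  · exact hn (by simpa using one_mem n)
  · refine hB.mem_iff.2 ⟨n, trivial, fun p hp => hn ?_⟩
    simpa using inv_subset n (inv_mem_inv.2 hp)
  · refine ⟨_, hB.mem_of_mem (i := n + 1) trivial, ?_⟩
    rintro ⟨a, c⟩ ⟨b, hab, hbc⟩
    have hab : a⁻¹ * b ∈ W (n + 1) := hab
    have hbc : b⁻¹ * c ∈ W (n + 1) := hbc
    have hac : a⁻¹ * b * (b⁻¹ * c) ∈ W n := mul_subset n (Set.mul_mem_mul hab hbc)
    exact hn (by simpa [mul_assoc] using hac)

theorem exists_metrizableSpace_nhds_hasBasis_smul (W : ℕ → Set G)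
    (one_mem : ∀ n, (1 : G) ∈ W n) (inv_subset : ∀ n, (W n)⁻¹ ⊆ W n)
    (mul_subset : ∀ n, W (n + 1) * W (n + 1) ⊆ W n) (iInter_eq : ⋂ n, W n = {1}) :
    ∃ t : TopologicalSpace G, @TopologicalSpace.MetrizableSpace G t ∧
      ∀ x : G, (@nhds G t x).HasBasis (fun _ => True) fun n => x • W n := by
  obtain ⟨u, hu⟩ := exists_uniformSpace_hasBasis_inv_mul_mem W one_mem inv_subset mul_subset
  have : (𝓤 G).IsCountablyGenerated := hu.isCountablyGenerated
  have : T0Space G := by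
    rw [t0Space_iff_ker_uniformity, hu.ker]
    ext ⟨x, y⟩
    simp [← mem_iInter (s := W), iInter_eq, inv_mul_eq_one]
  refine ⟨_, UniformSpace.metrizableSpace, fun x => ?_⟩
  convert nhds_basis_uniformity' hu using 2 with n
  ext y
  simp [mem_smul_set_iff_inv_smul_mem, UniformSpace.ball]

end Group

section ContinuousMul

variable {G : Type*} [TopologicalSpace G] [Group G] [ContinuousMul G]

variable (G) in
theorem exists_antitone_basis_nhds_one_mul_subset [FirstCountableTopology G] :
    ∃ V : ℕ → Set G, (𝓝 1).HasAntitoneBasis V ∧ ∀ n, V (n + 1) * V (n + 1) ⊆ V n := by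
  obtain ⟨u, hu⟩ := (𝓝 (1 : G)).exists_antitone_basis
  have eventually_mul_subset : ∀ n, ∀ᶠ m in atTop, u m * u m ⊆ u n := fun n => by
    obtain ⟨U, hUo, hU1, hUU⟩ := exists_open_nhds_one_mul_subset (hu.mem n)
    filter_upwards [hu.tendsto_smallSets.eventually
      (eventually_smallSets_subset.2 (hUo.mem_nhds hU1))] with m hm
    exact (mul_subset_mul hm hm).trans hUU
  obtain ⟨φ, -, hφ, hbasis⟩ := hu.subbasis_with_rel eventually_mul_subset
  exact ⟨u ∘ φ, hbasis, fun n => hφ n.lt_succ_self⟩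

theorem closure_mul_closure_subset_closure_mul (s t : Set G) :
    closure s * closure t ⊆ closure (s * t) :=
  image2_subset_iff.2 fun _ ha _ hb =>
    map_mem_closure₂ continuous_mul ha hb fun _ hx _ hy => mul_mem_mul hx hy

theorem eq_one_of_forall_nhds_frequently_inter_nonempty [T2Space G] {x : ℕ → G}
    {O : ℕ → Set G} (hx : Tendsto x atTop (𝓝 1))
    (hO : Tendsto (fun m => x m • O m) atTop (𝓝 1).smallSets) {y : G}
    (hy : ∀ M ∈ 𝓝 y, ∃ᶠ m in atTop, (O m ∩ M).Nonempty) : y = 1 := by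
  refine eq_of_nhds_neBot (inf_neBot_iff.2 fun M hM N hN => ?_)
  have hmul : (fun p : G × G => p.1 * p.2) ⁻¹' M ∈ 𝓝 1 ×ˢ 𝓝 y := by
    rw [← nhds_prod_eq]
    exact continuous_mul.continuousAt.preimage_mem_nhds (by simpa using hM)
  obtain ⟨A, hA, B, hB, hAB⟩ := mem_prod_iff.1 hmul
  obtain ⟨m, ⟨z, hzO, hzB⟩, hxA, hxO⟩ := ((hy B hB).and_eventually
    ((hx.eventually hA).and (hO.eventually (eventually_smallSets_subset.2 hN)))).exists
  exact ⟨x m * z, hAB (mk_mem_prod hxA hzB), hxO (smul_mem_smul_set hzO)⟩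

/- Otherwise pick `x m ∈ V m` with `(x m)⁻¹ ∉ closure N`. The nonempty open sets
`O m = (x m)⁻¹ • interior (V m) \ closure N` can only accumulate at `1`, because `x m → 1`;
but `N` is a neighbourhood of `1` missing all of them, so they form an infinite locally
finite family. -/
theorem inv_closure_mem_nhds_one [T2Space G] [FirstCountableTopology G]
    (hG : FeeblyCompactSpace G) {N : Set G} (hN : N ∈ 𝓝 1) : (closure N)⁻¹ ∈ 𝓝 1 := by
  obtain ⟨V, hV⟩ := (𝓝 (1 : G)).exists_antitone_basis
  by_contra! h
  have : ∀ m, ∃ x ∈ V m, x⁻¹ ∉ closure N := fun m => by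
    by_contra! h'
    exact h (mem_of_superset (hV.mem m) h')
  choose x hxV hxN using this
  set O : ℕ → Set G := fun m => (x m)⁻¹ • interior (V m) \ closure N
  have hO1 : ∀ m, (x m)⁻¹ ∈ O m := fun m => by
    refine ⟨?_, hxN m⟩
    simpa using smul_mem_smul_set (a := (x m)⁻¹) (mem_interior_iff_mem_nhds.2 (hV.mem m))
  refine hG.not_locallyFinite (fun m => (isOpen_interior.smul _).sdiff isClosed_closure)
    (fun m => ⟨_, hO1 m⟩) fun y => ?_
  by_contra! hy
  have hy1 : y = 1 := by
    refine eq_one_of_forall_nhds_frequently_inter_nonempty (hV.tendsto hxV)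
      (hV.tendsto_smallSets.smallSets_mono (.of_forall fun m => ?_))
      fun M hM => Nat.frequently_atTop_iff_infinite.2 (hy M hM)
    calc x m • O m ⊆ x m • (x m)⁻¹ • interior (V m) := smul_set_mono sdiff_subset
      _ = interior (V m) := smul_inv_smul _ _
      _ ⊆ V m := interior_subset
  subst hy1
  exact hy N hN (finite_empty.subset fun m ⟨z, hzO, hzN⟩ => hzO.2 (subset_closure hzN))

end ContinuousMul

/-- If `(G, τ)` is a Hausdorff feebly compact first-countable paratopological group
(feebly compact: every locally finite family of nonempty open subsets is finite),
then `G` is submetrizable: there is a metrizable topology on `G` coarser than `τ`. -/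
theorem hausdorff_feeblyCompact_firstCountable_paratopological_group_submetrizable
    {G : Type*} [Group G] [t : TopologicalSpace G] [T2Space G] [ContinuousMul G]
    [FirstCountableTopology G]
    (hfc : ∀ 𝒰 : Set (Set G), (∀ U ∈ 𝒰, IsOpen U ∧ U.Nonempty) →
      LocallyFinite (fun U : 𝒰 => (U : Set G)) → 𝒰.Finite) :
    ∃ t' : TopologicalSpace G, t ≤ t' ∧ @TopologicalSpace.MetrizableSpace G t' := by
  obtain ⟨V, hV, hVmul⟩ := exists_antitone_basis_nhds_one_mul_subset G
  set W : ℕ → Set G := fun n => closure (V n) ∩ (closure (V n))⁻¹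
  have hW : ∀ n, W n ∈ 𝓝 1 := fun n =>
    inter_mem (mem_of_superset (hV.mem n) subset_closure)
      (inv_closure_mem_nhds_one hfc (hV.mem n))
  have hWinv : ∀ n, (W n)⁻¹ ⊆ W n := fun n => by simp [W, inter_inv, inter_comm]
  have hWmul : ∀ n, W (n + 1) * W (n + 1) ⊆ W n := fun n => inter_inv_mul_inter_inv_subset
    ((closure_mul_closure_subset_closure_mul _ _).trans (closure_mono (hVmul n)))
  have hWsep : ⋂ n, W n = {1} := by
    refine eq_singleton_iff_unique_mem.2
      ⟨mem_iInter.2 fun n => mem_of_mem_nhds (hW n), fun z hz => eq_of_nhds_neBot ?_⟩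
    exact hV.toHasBasis.clusterPt_iff_forall_mem_closure.2 fun n _ => (mem_iInter.1 hz n).1
  have hWx : ∀ x : G, ∀ n, x • W n ∈ 𝓝 x := fun x n => by
    simpa using (smul_mem_nhds_smul_iff x).2 (hW n)
  obtain ⟨t', ht', hnhds⟩ := exists_metrizableSpace_nhds_hasBasis_smul W
    (fun n => mem_of_mem_nhds (hW n)) hWinv hWmul hWsep
  exact ⟨t', (le_iff_nhds _ _).2 fun x => (hnhds x).ge_iff.2 fun n _ => hWx x n, ht'⟩
end

section
/- Let (G, τ) be a Hausdorff Abelian paratopological group. If G is locally countable (i.e., the identity has a countable open neighborhood), then G is submetrizable. -/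
open Topology Filter Set Pointwise Uniformity

/-!
Enumerate the countable set `U / U` as `g 0, g 1, …` and, using the Hausdorff property, pick
neighbourhoods `T k` of `1` with `g k ∉ T k / T k` whenever `g k ≠ 1`. Continuity of
multiplication yields neighbourhoods `V k ⊆ U ∩ T k` of `1` with `V (k+1)² ⊆ V k`;
commutativity makes `W k = V k / V k` a symmetric sequence with `W (k+1)² ⊆ W k`, hence a
neighbourhood basis of `1` for a group topology coarser than the given one. Since
`W k ⊆ U / U` and `g k ∉ W k` for `g k ≠ 1`, the sets `W k` meet in `{1}`, so this group
topology is Hausdorff and first countable, hence metrizable by Birkhoff–Kakutani.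
-/

theorem IsTopologicalGroup.metrizableSpace_of_isCountablyGenerated_nhds_one {G : Type*} [Group G]
    [TopologicalSpace G] [IsTopologicalGroup G] [T0Space G] [(𝓝 (1 : G)).IsCountablyGenerated] :
    TopologicalSpace.MetrizableSpace G := by
  let _ := IsTopologicalGroup.rightUniformSpace G
  have : (𝓤 G).IsCountablyGenerated := by
    rw [uniformity_eq_comap_nhds_one']
    exact comap.isCountablyGenerated _ _
  exact UniformSpace.metrizableSpace

theorem GroupFilterBasis.le_topology {G : Type*} [Group G] [t : TopologicalSpace G]
    [SeparatelyContinuousMul G] (B : GroupFilterBasis G) (hB : ∀ U ∈ B, U ∈ 𝓝 (1 : G)) :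
    t ≤ B.topology :=
  le_of_nhds_le_nhds fun x => (B.nhds_hasBasis x).ge_iff.2 fun U hU => by
    simpa [← smul_eq_mul, Set.image_smul] using (smul_mem_nhds_smul_iff x).2 (hB U hU)

theorem exists_mem_nhds_one_eq_one_of_mem_div {G : Type*} [Group G] [TopologicalSpace G]
    [T2Space G] [SeparatelyContinuousMul G] (g : G) :
    ∃ T ∈ 𝓝 (1 : G), g ∈ T / T → g = 1 := by
  by_cases hg : g = 1
  · exact ⟨univ, univ_mem, fun _ => hg⟩
  obtain ⟨A, B, hA, hB, hAB⟩ := t2_separation_nhds (Ne.symm hg)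
  have hB' : (g * ·) ⁻¹' B ∈ 𝓝 (1 : G) :=
    (continuous_const_mul g).continuousAt.preimage_mem_nhds (by simpa using hB)
  refine ⟨A ∩ (g * ·) ⁻¹' B, inter_mem hA hB', ?_⟩
  rintro ⟨a, ⟨haA, -⟩, b, ⟨-, hbB⟩, rfl⟩
  exact (hAB.ne_of_mem haA (by simpa using hbB) (by group)).elim

theorem exists_seq_mem_nhds_one_mul_subset {M : Type*} [Monoid M] [TopologicalSpace M]
    [ContinuousMul M] (Q : ℕ → Set M) (hQ : ∀ n, Q n ∈ 𝓝 (1 : M)) :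
    ∃ V : ℕ → Set M, (∀ n, V n ∈ 𝓝 (1 : M)) ∧ (∀ n, V n ⊆ Q n) ∧
      ∀ n, V (n + 1) * V (n + 1) ⊆ V n := by
  have split : ∀ A ∈ 𝓝 (1 : M), ∃ B ∈ 𝓝 (1 : M), B * B ⊆ A := fun A hA => by
    obtain ⟨B, hB, hB1, hBA⟩ := exists_open_nhds_one_mul_subset hA
    exact ⟨B, hB.mem_nhds hB1, hBA⟩
  choose! f hf_mem hf_mul using split
  let V : ℕ → Set M := fun n => Nat.rec (Q 0) (fun n Vn => f (Vn ∩ Q (n + 1))) n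
  have hV_mem : ∀ n, V n ∈ 𝓝 (1 : M) := by
    intro n
    induction n with
    | zero => exact hQ 0
    | succ n ih => exact hf_mem _ (inter_mem ih (hQ _))
  have hV_mul : ∀ n, V (n + 1) * V (n + 1) ⊆ V n ∩ Q (n + 1) := fun n =>
    hf_mul _ (inter_mem (hV_mem n) (hQ _))
  have hV_sub : ∀ n, V (n + 1) ⊆ V n ∩ Q (n + 1) := fun n =>
    (subset_mul_left _ (mem_of_mem_nhds (hV_mem (n + 1)))).trans (hV_mul n)
  refine ⟨V, hV_mem, ?_, fun n => (hV_mul n).trans inter_subset_left⟩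
  rintro (_ | n)
  exacts [subset_rfl, (hV_sub n).trans inter_subset_right]

structure IsSymmHalvingSeq {G : Type*} [Group G] (W : ℕ → Set G) : Prop where
  one_mem : ∀ n, (1 : G) ∈ W n
  inv_subset : ∀ n, (W n)⁻¹ ⊆ W n
  mul_subset : ∀ n, W (n + 1) * W (n + 1) ⊆ W n

namespace IsSymmHalvingSeq

variable {G : Type*} [CommGroup G] {W : ℕ → Set G}

theorem div_self {V : ℕ → Set G} (hV_one : ∀ n, (1 : G) ∈ V n)
    (hV_mul : ∀ n, V (n + 1) * V (n + 1) ⊆ V n) : IsSymmHalvingSeq fun n => V n / V n where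
  one_mem n := by simpa using div_mem_div (hV_one n) (hV_one n)
  inv_subset n := by rw [inv_div]
  mul_subset n := by
    rw [div_mul_div_comm]
    exact div_subset_div (hV_mul n) (hV_mul n)

theorem antitone (hW : IsSymmHalvingSeq W) : Antitone W :=
  antitone_nat_of_succ_le fun n => (subset_mul_left _ (hW.one_mem _)).trans (hW.mul_subset n)

@[reducible]
def groupFilterBasis (hW : IsSymmHalvingSeq W) : GroupFilterBasis G :=
  groupFilterBasisOfComm (range W) (range_nonempty W)
    (by
      rintro _ _ ⟨m, rfl⟩ ⟨n, rfl⟩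
      exact ⟨W (max m n), mem_range_self _,
        subset_inter (hW.antitone (le_max_left m n)) (hW.antitone (le_max_right m n))⟩)
    (by rintro _ ⟨n, rfl⟩; exact hW.one_mem n)
    (by rintro _ ⟨n, rfl⟩; exact ⟨W (n + 1), mem_range_self _, hW.mul_subset n⟩)
    (by
      rintro _ ⟨n, rfl⟩
      exact ⟨W n, mem_range_self _, fun x hx => hW.inv_subset n (by simpa)⟩)

theorem nhds_one_hasBasis (hW : IsSymmHalvingSeq W) :
    (@nhds G hW.groupFilterBasis.topology 1).HasBasis (fun _ => True) W :=
  hW.groupFilterBasis.nhds_one_hasBasis.to_hasBasis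
    (by rintro _ ⟨n, rfl⟩; exact ⟨n, trivial, subset_rfl⟩)
    (fun n _ => ⟨W n, mem_range_self n, subset_rfl⟩)

theorem metrizableSpace (hW : IsSymmHalvingSeq W) (hsep : ⋂ n, W n ⊆ {1}) :
    @TopologicalSpace.MetrizableSpace G hW.groupFilterBasis.topology := by
  let _ := hW.groupFilterBasis.topology
  have := hW.groupFilterBasis.isTopologicalGroup
  have : T2Space G := (hW.groupFilterBasis.t2Space_iff_sInter_subset rfl).2 <| by
    rwa [← sInter_range] at hsep
  have := hW.nhds_one_hasBasis.isCountablyGenerated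
  exact IsTopologicalGroup.metrizableSpace_of_isCountablyGenerated_nhds_one

theorem exists_coarser_metrizableSpace [t : TopologicalSpace G] [SeparatelyContinuousMul G]
    (hW : IsSymmHalvingSeq W) (hW_nhds : ∀ n, W n ∈ 𝓝 (1 : G)) (hsep : ⋂ n, W n ⊆ {1}) :
    ∃ t' : TopologicalSpace G, t ≤ t' ∧ @TopologicalSpace.MetrizableSpace G t' :=
  ⟨_, hW.groupFilterBasis.le_topology (by rintro _ ⟨n, rfl⟩; exact hW_nhds n),
    hW.metrizableSpace hsep⟩

end IsSymmHalvingSeq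

/-- Let `(G, τ)` be a Hausdorff Abelian paratopological group. If `G` is locally
countable (the identity has a countable open neighborhood), then `G` is submetrizable:
there is a metrizable topology on `G` coarser than `τ`. -/
theorem hausdorff_abelian_locallyCountable_paratopological_group_submetrizable
    {G : Type*} [CommGroup G] [t : TopologicalSpace G] [T2Space G] [ContinuousMul G]
    (hloc : ∃ U : Set G, IsOpen U ∧ (1 : G) ∈ U ∧ U.Countable) :
    ∃ t' : TopologicalSpace G, t ≤ t' ∧ @TopologicalSpace.MetrizableSpace G t' := by
  obtain ⟨U, hU_open, hU_one, hU_countable⟩ := hloc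
  obtain ⟨g, hg⟩ : ∃ g : ℕ → G, U / U = range g := by
    rw [← image2_div]
    exact (hU_countable.image2 hU_countable (· / ·)).exists_eq_range
      ⟨1, 1, hU_one, 1, hU_one, div_one 1⟩
  choose T hT_mem hT_sep using exists_mem_nhds_one_eq_one_of_mem_div (G := G)
  obtain ⟨V, hV_mem, hV_sub, hV_mul⟩ := exists_seq_mem_nhds_one_mul_subset
    (fun n => U ∩ T (g n)) fun n => inter_mem (hU_open.mem_nhds hU_one) (hT_mem _)
  have hV_one : ∀ n, (1 : G) ∈ V n := fun n => mem_of_mem_nhds (hV_mem n)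
  refine (IsSymmHalvingSeq.div_self hV_one hV_mul).exists_coarser_metrizableSpace
    (fun n => mem_of_superset (hV_mem n) fun x hx => ⟨x, hx, 1, hV_one n, div_one x⟩) ?_
  intro x hx
  have hx_mem : ∀ n, x ∈ (U ∩ T (g n)) / (U ∩ T (g n)) := fun n =>
    div_subset_div (hV_sub n) (hV_sub n) (mem_iInter.1 hx n)
  obtain ⟨k, rfl⟩ : x ∈ range g :=
    hg ▸ div_subset_div inter_subset_left inter_subset_left (hx_mem 0)
  exact hT_sep _ (div_subset_div inter_subset_right inter_subset_right (hx_mem k))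
end

section
/- There exists a paratopological group G which is regular, separable, and developable (i.e., a Moore space), but which is not metrizable. -/
open Topology

/-- A witness for the existence of a regular, separable, developable (i.e. Moore)
paratopological group that is not metrizable.  A development is a sequence of open
covers `P n` such that the stars `st(x, P n) = ⋃₀ {A ∈ P n | x ∈ A}` form a
neighborhood base at every point `x`. -/
structure NonMetrizableMooreParatopGroupWitness where
  G : Type
  [group : Group G]
  [top : TopologicalSpace G]
  paratopological : ContinuousMul G
  regular : RegularSpace G
  t1 : T1Space G
  separable : TopologicalSpace.SeparableSpace G
  developable : ∃ P : ℕ → Set (Set G),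
    (∀ n, (∀ A ∈ P n, IsOpen A) ∧ ⋃₀ P n = Set.univ) ∧
    ∀ x : G, (𝓝 x).HasBasis (fun _ : ℕ => True)
      (fun n => ⋃₀ {A | A ∈ P n ∧ x ∈ A})
  not_metrizable : ¬ TopologicalSpace.MetrizableSpace G



open Topology Filter Set

namespace NMMPG

abbrev X : Type := ℝ × ℚ

/-- Basic neighborhoods of `0`: the origin together with points `(t, q)` with
`0 < q < ε` rational and `0 ≤ t ≤ q` real. -/
def V (ε : ℚ) : Set X :=
  {p | p = 0 ∨ (0 < p.2 ∧ p.2 < ε ∧ 0 ≤ p.1 ∧ p.1 ≤ (p.2 : ℝ))}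

lemma zero_mem_V (ε : ℚ) : (0 : X) ∈ V ε := Or.inl rfl

lemma V_mono {a b : ℚ} (h : a ≤ b) : V a ⊆ V b := by
  rintro p (rfl | ⟨h1, h2, h3, h4⟩)
  · exact Or.inl rfl
  · exact Or.inr ⟨h1, lt_of_lt_of_le h2 h, h3, h4⟩

lemma add_mem_V {a b : ℚ} (ha : 0 < a) (hb : 0 < b) {v w : X}
    (hv : v ∈ V a) (hw : w ∈ V b) : v + w ∈ V (a + b) := by
  rcases hv with rfl | ⟨hv1, hv2, hv3, hv4⟩
  · rw [zero_add]; exact V_mono (by linarith) hw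
  rcases hw with rfl | ⟨hw1, hw2, hw3, hw4⟩
  · rw [add_zero]; exact V_mono (by linarith) (Or.inr ⟨hv1, hv2, hv3, hv4⟩)
  · refine Or.inr ?_
    simp only [Prod.fst_add, Prod.snd_add]
    refine ⟨by linarith, by linarith, by linarith, ?_⟩
    push_cast
    linarith

def ball (x : X) (ε : ℚ) : Set X := {y | y - x ∈ V ε}

lemma self_mem_ball (x : X) (ε : ℚ) : x ∈ ball x ε := by
  show x - x ∈ V ε
  rw [sub_self]
  exact zero_mem_V ε

lemma ball_mono {a b : ℚ} (h : a ≤ b) (x : X) : ball x a ⊆ ball x b :=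
  fun _ hy => V_mono h hy

def T : TopologicalSpace X where
  IsOpen U := ∀ x ∈ U, ∃ ε : ℚ, 0 < ε ∧ ball x ε ⊆ U
  isOpen_univ := fun _ _ => ⟨1, one_pos, subset_univ _⟩
  isOpen_inter := by
    intro U W hU hW x hx
    obtain ⟨a, ha, haU⟩ := hU x hx.1
    obtain ⟨b, hb, hbW⟩ := hW x hx.2
    exact ⟨min a b, lt_min ha hb,
      subset_inter ((ball_mono (min_le_left a b) x).trans haU)
        ((ball_mono (min_le_right a b) x).trans hbW)⟩
  isOpen_sUnion := by
    intro s hs x hx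
    obtain ⟨U, hUs, hxU⟩ := hx
    obtain ⟨ε, hε, h⟩ := hs U hUs x hxU
    exact ⟨ε, hε, h.trans (subset_sUnion_of_mem hUs)⟩

attribute [local instance 1100] T

lemma isOpen_iff' {U : Set X} :
    IsOpen U ↔ ∀ x ∈ U, ∃ ε : ℚ, 0 < ε ∧ ball x ε ⊆ U := Iff.rfl

lemma exists_ball_subset {x y : X} {ε : ℚ} (hε : 0 < ε) (hy : y ∈ ball x ε) :
    ∃ δ : ℚ, 0 < δ ∧ ball y δ ⊆ ball x ε := by
  rcases hy with h0 | ⟨h1, h2, h3, h4⟩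
  · obtain rfl : y = x := sub_eq_zero.1 h0
    exact ⟨ε, hε, subset_rfl⟩
  · refine ⟨ε - (y - x).2, by linarith, ?_⟩
    intro z hz
    rcases hz with h0 | ⟨g1, g2, g3, g4⟩
    · obtain rfl : z = y := sub_eq_zero.1 h0
      exact Or.inr ⟨h1, h2, h3, h4⟩
    · have e : z - x = (z - y) + (y - x) := by abel
      refine Or.inr ?_
      rw [e]
      simp only [Prod.fst_add, Prod.snd_add]
      refine ⟨by linarith, by linarith, by linarith, ?_⟩
      push_cast
      linarith

lemma isOpen_ball (x : X) {ε : ℚ} (hε : 0 < ε) : IsOpen (ball x ε) :=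
  fun _ hy => exists_ball_subset hε hy

lemma nhds_basis (x : X) : (𝓝 x).HasBasis (fun ε : ℚ => 0 < ε) (ball x) := by
  refine Filter.hasBasis_iff.2 fun S => ⟨fun hS => ?_, fun ⟨ε, hε, hsub⟩ => ?_⟩
  · obtain ⟨U, hUS, hU, hxU⟩ := mem_nhds_iff.1 hS
    obtain ⟨ε, hε, h⟩ := hU x hxU
    exact ⟨ε, hε, h.trans hUS⟩
  · exact mem_nhds_iff.2 ⟨ball x ε, hsub, isOpen_ball x hε, self_mem_ball x ε⟩

lemma isClosed_ball (x : X) {ε : ℚ} (hε : 0 < ε) : IsClosed (ball x ε) := by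
  rw [← isOpen_compl_iff]
  intro y hy
  have hd : y - x ∉ V ε := hy
  -- component notation
  set t : ℝ := (y - x).1 with ht
  set q : ℚ := (y - x).2 with hq
  -- helper to finish each case: given δ with the right property
  have main : ∀ δ : ℚ, 0 < δ →
      (∀ v : X, v ∈ V δ → (y - x) + v ∉ V ε) → ∃ δ : ℚ, 0 < δ ∧ ball y δ ⊆ (ball x ε)ᶜ := by
    intro δ hδ h
    refine ⟨δ, hδ, ?_⟩
    intro z hz
    have e : z - x = (y - x) + (z - y) := by abel
    intro hzx
    exact h (z - y) hz (by rw [← e]; exact hzx)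
  have hne : y - x ≠ 0 := by
    intro h0
    exact hd (Or.inl h0)
  -- case analysis
  rcases lt_trichotomy q 0 with hq0 | hq0 | hq0
  · -- q < 0 : δ := -q
    refine main (-q) (by linarith) ?_
    rintro v (rfl | ⟨v1, v2, v3, v4⟩)
    · rw [add_zero]; exact hd
    · rintro (h0 | ⟨c1, c2, c3, c4⟩)
      · have : ((y - x) + v).2 = 0 := by rw [h0]; rfl
        simp only [Prod.snd_add] at this
        rw [← hq] at this
        linarith
      · simp only [Prod.snd_add] at c1
        rw [← hq] at c1
        linarith
  · -- q = 0, t ≠ 0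
    have htne : t ≠ 0 := by
      intro h0
      apply hne
      have : y - x = ((y - x).1, (y - x).2) := rfl
      rw [this, ← ht, ← hq, h0, hq0]
      rfl
    rcases htne.lt_or_gt with ht0 | ht0
    · -- t < 0 : pick rational δ ∈ (0, -t)
      obtain ⟨δ, hδ1, hδ2⟩ := exists_rat_btwn (show (0:ℝ) < -t by linarith)
      have hδpos : 0 < δ := by exact_mod_cast hδ1
      refine main δ hδpos ?_
      rintro v (rfl | ⟨v1, v2, v3, v4⟩)
      · rw [add_zero]; exact hd
      · rintro (h0 | ⟨c1, c2, c3, c4⟩)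
        · have : ((y - x) + v).1 = 0 := by rw [h0]; rfl
          simp only [Prod.fst_add] at this
          rw [← ht] at this
          have hv : v.1 < -t := lt_of_le_of_lt v4 (by
            calc (v.2 : ℝ) < (δ : ℝ) := by exact_mod_cast v2
            _ < -t := hδ2)
          linarith
        · simp only [Prod.fst_add] at c3
          rw [← ht] at c3
          have hv : v.1 < -t := lt_of_le_of_lt v4 (by
            calc (v.2 : ℝ) < (δ : ℝ) := by exact_mod_cast v2
            _ < -t := hδ2)
          linarith
    · -- t > 0 : pick rational δ ∈ (0, t)
      obtain ⟨δ, hδ1, hδ2⟩ := exists_rat_btwn (show (0:ℝ) < t by linarith)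
      have hδpos : 0 < δ := by exact_mod_cast hδ1
      refine main δ hδpos ?_
      rintro v (rfl | ⟨v1, v2, v3, v4⟩)
      · rw [add_zero]; exact hd
      · rintro (h0 | ⟨c1, c2, c3, c4⟩)
        · have : ((y - x) + v).1 = 0 := by rw [h0]; rfl
          simp only [Prod.fst_add] at this
          rw [← ht] at this
          linarith
        · -- first coord t + v.1 ≥ t > δ > q + v.2 = v.2 ... need (t+v.1) ≤ ((q+v.2):ℝ)
          simp only [Prod.fst_add, Prod.snd_add] at c4
          rw [← ht, ← hq] at c4
          have : ((q + v.2 : ℚ) : ℝ) < t + v.1 := by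
            push_cast
            have h1 : (v.2 : ℝ) < δ := by exact_mod_cast v2
            have hq0' : (q : ℝ) = 0 := by rw [hq0]; norm_num
            linarith
          linarith
  · -- q > 0
    by_cases hqe : q < ε
    · -- then ¬(0 ≤ t ∧ t ≤ q)
      have hbad : ¬(0 ≤ t ∧ t ≤ (q : ℝ)) := by
        intro ⟨u1, u2⟩
        exact hd (Or.inr ⟨hq0, hqe, u1, u2⟩)
      rcases not_and_or.1 hbad with hbad | hbad
      · -- t < 0
        push_neg at hbad
        obtain ⟨δ, hδ1, hδ2⟩ := exists_rat_btwn (show (0:ℝ) < -t by linarith)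
        have hδpos : 0 < δ := by exact_mod_cast hδ1
        refine main δ hδpos ?_
        rintro v (rfl | ⟨v1, v2, v3, v4⟩)
        · rw [add_zero]; exact hd
        · rintro (h0 | ⟨c1, c2, c3, c4⟩)
          · have : ((y - x) + v).1 = 0 := by rw [h0]; rfl
            simp only [Prod.fst_add] at this
            rw [← ht] at this
            have hv : v.1 < -t := lt_of_le_of_lt v4 (by
              calc (v.2 : ℝ) < (δ : ℝ) := by exact_mod_cast v2
              _ < -t := hδ2)
            linarith
          · simp only [Prod.fst_add] at c3
            rw [← ht] at c3
            have hv : v.1 < -t := lt_of_le_of_lt v4 (by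
              calc (v.2 : ℝ) < (δ : ℝ) := by exact_mod_cast v2
              _ < -t := hδ2)
            linarith
      · -- t > q
        push_neg at hbad
        obtain ⟨δ, hδ1, hδ2⟩ := exists_rat_btwn (show (0:ℝ) < t - q by linarith)
        have hδpos : 0 < δ := by exact_mod_cast hδ1
        refine main δ hδpos ?_
        rintro v (rfl | ⟨v1, v2, v3, v4⟩)
        · rw [add_zero]; exact hd
        · rintro (h0 | ⟨c1, c2, c3, c4⟩)
          · have : ((y - x) + v).2 = 0 := by rw [h0]; rfl
            simp only [Prod.snd_add] at this
            rw [← hq] at this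
            linarith
          · simp only [Prod.fst_add, Prod.snd_add] at c4
            rw [← ht, ← hq] at c4
            have h1 : (v.2 : ℝ) < δ := by exact_mod_cast v2
            have h2 : ((q + v.2 : ℚ) : ℝ) < t + v.1 := by
              push_cast
              have : (δ : ℝ) < t - q := hδ2
              linarith
            linarith
    · -- q ≥ ε
      push_neg at hqe
      refine main 1 one_pos ?_
      rintro v (rfl | ⟨v1, v2, v3, v4⟩)
      · rw [add_zero]; exact hd
      · rintro (h0 | ⟨c1, c2, c3, c4⟩)
        · have : ((y - x) + v).2 = 0 := by rw [h0]; rfl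
          simp only [Prod.snd_add] at this
          rw [← hq] at this
          linarith
        · simp only [Prod.snd_add] at c2
          rw [← hq] at c2
          linarith



lemma continuousAdd : ContinuousAdd X := by
  constructor
  rw [continuous_iff_continuousAt]
  rintro ⟨x, y⟩
  unfold ContinuousAt
  rw [nhds_prod_eq]
  refine (((nhds_basis x).prod (nhds_basis y)).tendsto_iff (nhds_basis (x + y))).2 ?_
  intro ε hε
  refine ⟨(ε/2, ε/2), ⟨half_pos hε, half_pos hε⟩, ?_⟩
  rintro ⟨a, b⟩ ⟨ha, hb⟩
  show a + b - (x + y) ∈ V ε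
  have e : a + b - (x + y) = (a - x) + (b - y) := by abel
  rw [e]
  have h := add_mem_V (half_pos hε) (half_pos hε) ha hb
  rwa [add_halves] at h

lemma t1 : T1Space X := by
  rw [t1Space_iff_exists_open]
  intro x y hxy
  by_cases h : 0 < (y - x).2 ∧ 0 ≤ (y - x).1 ∧ (y - x).1 ≤ (((y - x).2 : ℚ) : ℝ)
  · refine ⟨ball x (y - x).2, isOpen_ball x h.1, self_mem_ball _ _, ?_⟩
    rintro (h0 | ⟨c1, c2, c3, c4⟩)
    · exact hxy (sub_eq_zero.1 h0).symm
    · exact absurd c2 (lt_irrefl _)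
  · refine ⟨ball x 1, isOpen_ball x one_pos, self_mem_ball _ _, ?_⟩
    rintro (h0 | ⟨c1, c2, c3, c4⟩)
    · exact hxy (sub_eq_zero.1 h0).symm
    · exact h ⟨c1, c3, c4⟩

lemma regular : RegularSpace X := by
  refine RegularSpace.of_exists_mem_nhds_isClosed_subset fun x S hS => ?_
  obtain ⟨ε, hε, hsub⟩ := (nhds_basis x).mem_iff.1 hS
  exact ⟨ball x ε, (nhds_basis x).mem_of_mem hε, isClosed_ball x hε, hsub⟩

lemma separable : TopologicalSpace.SeparableSpace X := by
  refine ⟨⟨Set.range (fun p : ℚ × ℚ => (((p.1 : ℝ), p.2) : X)), countable_range _, ?_⟩⟩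
  intro x
  rw [mem_closure_iff_nhds_basis (nhds_basis x)]
  intro ε hε
  have hcast : (0 : ℝ) < ((ε/2 : ℚ) : ℝ) := by exact_mod_cast half_pos hε
  obtain ⟨r, hr1, hr2⟩ := exists_rat_btwn (show x.1 < x.1 + ((ε/2 : ℚ) : ℝ) by linarith)
  refine ⟨(((r : ℝ), x.2 + ε/2) : X), ⟨(r, x.2 + ε/2), rfl⟩, ?_⟩
  show (((r : ℝ), x.2 + ε/2) : X) - x ∈ V ε
  refine Or.inr ?_
  simp only [Prod.fst_sub, Prod.snd_sub]
  refine ⟨?_, ?_, ?_, ?_⟩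
  · show (0:ℚ) < x.2 + ε/2 - x.2
    linarith [half_pos hε]
  · show x.2 + ε/2 - x.2 < ε
    linarith [half_pos hε]
  · show (0:ℝ) ≤ (r : ℝ) - x.1
    linarith
  · show ((r : ℝ) - x.1) ≤ ((x.2 + ε/2 - x.2 : ℚ) : ℝ)
    have : x.2 + ε/2 - x.2 = ε/2 := by ring
    rw [this]
    linarith


noncomputable def qn (n : ℕ) : ℚ := (Denumerable.eqv ℚ).symm n

noncomputable def qidx (q : ℚ) : ℕ := (Denumerable.eqv ℚ) q

lemma qn_qidx (q : ℚ) : qn (qidx q) = q := Equiv.symm_apply_apply _ _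

/-- The radius function for the `n`-th cover of the development. -/
noncomputable def psi (α : ℚ) (n : ℕ) : ℚ :=
  (insert (1/(n+1) : ℚ)
    (((Finset.range (n+1)).filter fun i => α < qn i).image fun i => qn i - α)).min'
    (Finset.insert_nonempty _ _)

lemma psi_pos (α : ℚ) (n : ℕ) : 0 < psi α n := by
  rw [psi, Finset.lt_min'_iff]
  intro b hb
  rcases Finset.mem_insert.1 hb with rfl | hb
  · positivity
  · obtain ⟨i, hi, rfl⟩ := Finset.mem_image.1 hb
    have := (Finset.mem_filter.1 hi).2
    linarith

lemma psi_le_one_div (α : ℚ) (n : ℕ) : psi α n ≤ 1/(n+1) :=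
  Finset.min'_le _ _ (Finset.mem_insert_self _ _)

lemma psi_le {α : ℚ} {n i : ℕ} (hi : i ≤ n) (h : α < qn i) : psi α n ≤ qn i - α :=
  Finset.min'_le _ _ (Finset.mem_insert_of_mem (Finset.mem_image.2
    ⟨i, Finset.mem_filter.2 ⟨Finset.mem_range.2 (Nat.lt_succ_of_le hi), h⟩, rfl⟩))

/-- The `n`-th cover of the development: all balls with vertex `y` and radius `psi y.2 n`. -/
def P (n : ℕ) : Set (Set X) := {S | ∃ y : X, S = ball y (psi y.2 n)}

lemma developable : ∃ P : ℕ → Set (Set X),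
    (∀ n, (∀ A ∈ P n, IsOpen A) ∧ ⋃₀ P n = Set.univ) ∧
    ∀ x : X, (𝓝 x).HasBasis (fun _ : ℕ => True)
      (fun n => ⋃₀ {A | A ∈ P n ∧ x ∈ A}) := by
  refine ⟨P, fun n => ⟨?_, ?_⟩, fun x => ?_⟩
  · rintro A ⟨y, rfl⟩
    exact isOpen_ball y (psi_pos _ _)
  · refine Set.eq_univ_of_forall fun z => ?_
    exact ⟨ball z (psi z.2 n), ⟨z, rfl⟩, self_mem_ball _ _⟩
  · refine Filter.hasBasis_iff.2 fun S => ⟨fun hS => ?_, ?_⟩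
    · obtain ⟨ε, hε, hsub⟩ := (nhds_basis x).mem_iff.1 hS
      obtain ⟨N, hN⟩ := exists_nat_one_div_lt hε
      refine ⟨max N (qidx x.2), trivial, ?_⟩
      set n := max N (qidx x.2) with hn
      have hsub2 : ⋃₀ {A | A ∈ P n ∧ x ∈ A} ⊆ ball x ε := by
        rintro z ⟨A, ⟨⟨y, rfl⟩, hxA⟩, hzA⟩
        rcases hxA with h0 | ⟨h1, h2, h3, h4⟩
        · obtain rfl : x = y := sub_eq_zero.1 h0
          refine ball_mono ?_ x hzA
          have e1 : psi x.2 n ≤ 1/(n+1) := psi_le_one_div _ _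
          have e2 : (1 : ℚ)/(n+1) ≤ 1/(N+1) := by
            apply one_div_le_one_div_of_le
            · positivity
            · have : (N : ℚ) ≤ (n : ℚ) := by exact_mod_cast le_max_left N (qidx x.2)
              linarith
          linarith
        · exfalso
          have hyx : y.2 < x.2 := by
            have : (x - y).2 = x.2 - y.2 := rfl
            rw [this] at h1
            linarith
          have hp : psi y.2 n ≤ x.2 - y.2 := by
            have h := psi_le (α := y.2) (n := n) (i := qidx x.2)
              (le_max_right N (qidx x.2)) (by rw [qn_qidx]; exact hyx)
            rwa [qn_qidx] at h
          have : (x - y).2 = x.2 - y.2 := rfl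
          rw [this] at h2
          linarith
      exact hsub2.trans hsub
    · rintro ⟨n, -, hsub⟩
      refine Filter.mem_of_superset ?_ hsub
      refine Filter.mem_of_superset
        ((isOpen_ball x (psi_pos x.2 n)).mem_nhds (self_mem_ball _ _)) ?_
      exact subset_sUnion_of_mem ⟨⟨x, rfl⟩, self_mem_ball _ _⟩

/-- A separable metrizable space is second countable. -/
lemma aux_secondCountable {Y : Type*} [t : TopologicalSpace Y]
    [TopologicalSpace.SeparableSpace Y]
    (h : TopologicalSpace.MetrizableSpace Y) : SecondCountableTopology Y := by
  letI := @TopologicalSpace.metrizableSpaceMetric Y t h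
  exact UniformSpace.secondCountable_of_separable Y

lemma not_metrizable : ¬ TopologicalSpace.MetrizableSpace X := by
  intro h
  -- we get a second countable topology
  haveI : TopologicalSpace.SeparableSpace X := separable
  haveI hSC : SecondCountableTopology X := aux_secondCountable h
  obtain ⟨B, hBc, -, hB⟩ := TopologicalSpace.exists_countable_basis X
  have key : ∀ a : ℝ, ∃ b ∈ B, ((a, 0) : X) ∈ b ∧ b ⊆ ball ((a, 0) : X) 1 := fun a =>
    hB.exists_subset_of_mem_open (self_mem_ball _ _) (isOpen_ball _ one_pos)
  choose f hfB hgf hfsub using key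
  haveI := hBc.to_subtype
  have hinj : Function.Injective fun a : ℝ => (⟨f a, hfB a⟩ : B) := by
    intro a a' he
    have he' : f a = f a' := congrArg Subtype.val he
    have hmem : ((a', 0) : X) ∈ ball ((a, 0) : X) 1 := hfsub a (he' ▸ hgf a')
    rcases hmem with h0 | ⟨c1, c2, c3, c4⟩
    · have : ((a', 0) : X) = ((a, 0) : X) := sub_eq_zero.1 h0
      have : a' = a := (Prod.ext_iff.1 this).1
      rw [this]
    · exfalso
      have : (((a', 0) : X) - ((a, 0) : X)).2 = 0 := by
        simp [Prod.snd_sub]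
      rw [this] at c1
      exact lt_irrefl _ c1
  exact absurd hinj.countable not_countable

end NMMPG

/-- There exists a paratopological group which is regular, separable and developable
(a Moore space), but not metrizable. -/
theorem exists_separable_Moore_paratopological_group_not_metrizable :
    Nonempty NonMetrizableMooreParatopGroupWitness := by
  refine ⟨{ G := Multiplicative NMMPG.X,
            group := inferInstance,
            top := NMMPG.T,
            paratopological := ?_,
            regular := ?_,
            t1 := ?_,
            separable := ?_,
            developable := ?_,
            not_metrizable := ?_ }⟩
  · exact @ContinuousMul.mk (Multiplicative NMMPG.X) NMMPG.T _
      (NMMPG.continuousAdd.continuous_add)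
  · exact NMMPG.regular
  · exact NMMPG.t1
  · exact NMMPG.separable
  · exact NMMPG.developable
  · exact NMMPG.not_metrizable
end

section
/- Let G be a regular T1 Baire quasi-developable paratopological group. Then for every open neighborhood U of the identity e, the closure of U⁻¹ = {u⁻¹ : u ∈ U} is a neighborhood of e. -/
open Topology Pointwise

/-- `P : ℕ → Set (Set X)` is a quasi-development for `X`: each `P n` is a family of
open sets, and for every point `x` and open `U ∋ x` there is `n` with
`x ∈ st(x, P n) ⊆ U`, where `st(x, P n) = ⋃₀ {A ∈ P n | x ∈ A}`. -/
def IsQuasiDevelopment {X : Type*} [TopologicalSpace X] (P : ℕ → Set (Set X)) : Prop :=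
  (∀ n, ∀ A ∈ P n, IsOpen A) ∧
  ∀ x : X, ∀ U : Set X, IsOpen U → x ∈ U →
    ∃ n, x ∈ ⋃₀ {A | A ∈ P n ∧ x ∈ A} ∧ ⋃₀ {A | A ∈ P n ∧ x ∈ A} ⊆ U

/-- Let `G` be a regular T1 Baire quasi-developable paratopological group. Then for
every open neighborhood `U` of the identity, the closure of `U⁻¹` is a neighborhood
of the identity. -/
theorem regular_baire_quasiDevelopable_closure_inv_mem_nhds
    {G : Type*} [Group G] [TopologicalSpace G] [ContinuousMul G]
    [RegularSpace G] [T1Space G] [BaireSpace G]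
    (hqd : ∃ P : ℕ → Set (Set G), IsQuasiDevelopment P)
    (U : Set G) (hU : IsOpen U) (h1U : (1 : G) ∈ U) :
    closure (U⁻¹ : Set G) ∈ 𝓝 (1 : G) := by
  obtain ⟨P, hPopen, hP⟩ := hqd
  -- M n : points x whose star in P n is a nonempty subset of x • U
  set M : ℕ → Set G := fun n =>
    {x | x ∈ ⋃₀ {A | A ∈ P n ∧ x ∈ A} ∧
      ⋃₀ {A | A ∈ P n ∧ x ∈ A} ⊆ (fun g => x⁻¹ * g) ⁻¹' U} with hM
  have hcover : (⋃ n, closure (M n)) = Set.univ := by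
    ext x
    simp only [Set.mem_univ, iff_true, Set.mem_iUnion]
    have hopen : IsOpen ((fun g => x⁻¹ * g) ⁻¹' U) := hU.preimage (continuous_const.mul continuous_id)
    have hx : x ∈ (fun g => x⁻¹ * g) ⁻¹' U := by simp [h1U]
    obtain ⟨n, h1, h2⟩ := hP x _ hopen hx
    exact ⟨n, subset_closure ⟨h1, h2⟩⟩
  obtain ⟨n, w, hw⟩ := nonempty_interior_of_iUnion_of_closed (fun n => isClosed_closure) hcover
  have hwcl : w ∈ closure (M n) := interior_subset hw
  obtain ⟨m, hmW, hmM⟩ :=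
    mem_closure_iff.mp hwcl _ isOpen_interior hw
  obtain ⟨A, ⟨hAP, hmA⟩, hmA'⟩ := hmM.1
  -- key: any y ∈ M n with y ∈ A satisfies m⁻¹ * y ∈ U⁻¹
  have key : ∀ y ∈ M n, y ∈ A → m⁻¹ * y ∈ (U⁻¹ : Set G) := by
    intro y hy hyA
    have hmst : m ∈ ⋃₀ {B | B ∈ P n ∧ y ∈ B} := ⟨A, ⟨hAP, hyA⟩, hmA'⟩
    have : y⁻¹ * m ∈ U := hy.2 hmst
    simpa using Set.inv_mem_inv.mpr this
  -- every point of O := A ∩ interior (closure (M n)), left-translated by m⁻¹, is in closure U⁻¹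
  set O : Set G := A ∩ interior (closure (M n)) with hO
  have hOopen : IsOpen O := (hPopen n A hAP).inter isOpen_interior
  have hmO : m ∈ O := ⟨hmA', hmW⟩
  have hsub : ∀ z ∈ O, m⁻¹ * z ∈ closure (U⁻¹ : Set G) := by
    intro z hz
    rw [mem_closure_iff]
    intro N hN hzN
    have hzcl : z ∈ closure (M n) := interior_subset hz.2
    have hN'open : IsOpen ((fun g => m⁻¹ * g) ⁻¹' N ∩ O) :=
      (hN.preimage (continuous_const.mul continuous_id)).inter hOopen
    have hzN' : z ∈ (fun g => m⁻¹ * g) ⁻¹' N ∩ O := ⟨hzN, hz⟩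
    obtain ⟨y, ⟨hyN, hyO⟩, hyM⟩ := mem_closure_iff.mp hzcl _ hN'open hzN'
    exact ⟨m⁻¹ * y, hyN, key y hyM hyO.1⟩
  -- conclude
  have hVopen : IsOpen ((fun g => m * g) ⁻¹' O) := hOopen.preimage (continuous_const.mul continuous_id)
  have h1V : (1 : G) ∈ (fun g => m * g) ⁻¹' O := by simpa using hmO
  have hVsub : ((fun g => m * g) ⁻¹' O) ⊆ closure (U⁻¹ : Set G) := by
    intro g hg
    have := hsub (m * g) hg
    simpa using this
  exact Filter.mem_of_superset (hVopen.mem_nhds h1V) hVsub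
end

section
/- Let G be a regular T1 countable paratopological group which is locally kω (every point has a neighborhood which, as a subspace, is a kω-space). Then either G is a discrete topological group (in particular the inverse operation is continuous), or G contains a closed subspace homeomorphic to Sω. -/
open Topology

/-- `X` is a `kω`-space: there are countably many compact spaces `K n` and a quotient
map from their topological sum onto `X`. -/
def IsKOmegaSpace (X : Type*) [TopologicalSpace X] : Prop :=
  ∃ (K : ℕ → Type) (tK : ∀ n, TopologicalSpace (K n)),
    (∀ n, @CompactSpace (K n) (tK n)) ∧
    ∃ f : (Σ n, K n) → X,
      @IsQuotientMap _ _ (@instTopologicalSpaceSigma ℕ K tK) _ f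

/-- The setoid on `ℕ × (ℕ ∪ {∞})` identifying all points `(n, ∞)`. -/
def SOmegaSetoid : Setoid (ℕ × OnePoint ℕ) where
  r p q := p = q ∨ (p.2 = OnePoint.infty ∧ q.2 = OnePoint.infty)
  iseqv := by
    constructor
    · intro p
      exact Or.inl rfl
    · rintro p q (rfl | ⟨h1, h2⟩)
      · exact Or.inl rfl
      · exact Or.inr ⟨h2, h1⟩
    · rintro p q r (rfl | ⟨h1, h2⟩) (rfl | ⟨h3, h4⟩)
      · exact Or.inl rfl
      · exact Or.inr ⟨h3, h4⟩
      · exact Or.inr ⟨h1, h2⟩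
      · exact Or.inr ⟨h1, h4⟩

/-- The sequential fan `Sω`: the quotient of the topological sum of countably many
convergent sequences `ℕ × (ℕ ∪ {∞})` obtained by identifying all limit points
`(n, ∞)` to a single point, with the quotient topology. -/
def SOmega : Type := Quotient SOmegaSetoid

instance : TopologicalSpace SOmega := instTopologicalSpaceQuotient

/-!
If some point of `G` is isolated, left translations (homeomorphisms even in a paratopological
group) make every point isolated. Otherwise countability glues the local `kω`-structures into
one increasing sequence of compact sets `D m` determining the topology; compact subsets of a
countable Hausdorff space are first countable, so `G` is sequential. By Baire, no `D m` is a
neighbourhood of `1`. In a sequential paratopological group, joint continuity of multiplication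
makes every set that absorbs all sequences converging to `1` (and has countably generated trace
at `1`) a neighbourhood of `1`; hence for each `m` some sequence converging to `1` avoids `D m`.
Choosing these sequences outside ever larger `D m` yields a fan at `1` of which each `D m` meets
only finitely many sequences; as the `D m` determine the topology, the fan is a closed copy
of `Sω`.
-/

open Filter Set Topology Function

section CountableCompact

variable {X : Type*} [TopologicalSpace X] [T2Space X] [Countable X]

/-- For each `y ≠ x` fix an open `U y ∋ x` separated from `y`. If an open `u ∋ x` were not in
the filter generated by `T` and the `U y`, this filter restricted to the compact set `T \ u`
would have a cluster point `y`, which `U y` excludes. -/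
theorem IsCompact.isCountablyGenerated_nhdsWithin {T : Set X} (hT : IsCompact T) (x : X) :
    (𝓝[T] x).IsCountablyGenerated := by
  choose U V hU hV hxU hyV hUV using fun y : {y // y ≠ x} => t2_separation y.2.symm
  set F := (⨅ y, 𝓟 (U y)) ⊓ 𝓟 T
  suffices 𝓝[T] x = F by rw [this]; infer_instance
  refine le_antisymm (inf_le_inf_right _ <| le_iInf fun y => le_principal_iff.2 <|
    (hU y).mem_nhds (hxU y)) (le_inf ?_ inf_le_right)
  refine (nhds_basis_opens x).ge_iff.2 fun u ⟨hxu, hu⟩ => ?_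
  by_contra huF
  have := notMem_iff_inf_principal_compl.1 huF
  obtain ⟨y, ⟨-, hyu⟩, hy⟩ := (hT.diff hu).exists_clusterPt (f := F ⊓ 𝓟 uᶜ) <| by
    rw [sdiff_eq, ← inf_principal]; exact inf_le_inf_right _ inf_le_right
  have hyx : y ≠ x := fun h => hyu (h ▸ hxu)
  refine hy.neBot.ne (empty_mem_iff_bot.1 ?_)
  exact mem_of_superset (inter_mem_inf ((hV ⟨y, hyx⟩).mem_nhds (hyV _))
    (mem_inf_of_left (mem_inf_of_left (mem_iInf_of_mem ⟨y, hyx⟩ (mem_principal_self _)))))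
    (hUV ⟨y, hyx⟩).symm.inter_eq.subset

theorem IsCompact.firstCountableTopology {T : Set X} (hT : IsCompact T) :
    FirstCountableTopology T where
  nhds_generated_countable y := by
    have := hT.isCountablyGenerated_nhdsWithin y
    rw [nhds_subtype_eq_comap_nhdsWithin]
    infer_instance

end CountableCompact

theorem Filter.Tendsto.isCompact_insert_image {X : Type*} [TopologicalSpace X] {x : ℕ → X}
    {a : X} (hx : Tendsto x atTop (𝓝 a)) (s : Set ℕ) : IsCompact (insert a (x '' s)) := by
  have : Tendsto (x ∘ ((↑) : s → ℕ)) cofinite (𝓝 a) :=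
    (Nat.cofinite_eq_atTop ▸ hx).comp Subtype.val_injective.tendsto_cofinite
  simpa [range_comp] using this.isCompact_insert_range_of_cofinite

theorem Filter.Tendsto.exists_injective_tendsto {X : Type*} [TopologicalSpace X] [T1Space X]
    {u : ℕ → X} {a : X} (hu : Tendsto u atTop (𝓝 a)) (hne : ∀ k, u k ≠ a) :
    ∃ v : ℕ → X, Tendsto v atTop (𝓝 a) ∧ Injective v ∧ range v ⊆ range u := by
  rw [← Nat.cofinite_eq_atTop] at hu ⊢
  have hfin (O : Set X) (hO : O ∈ 𝓝 a) : (range u \ O).Finite :=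
    ((eventually_cofinite.1 (hu.eventually_mem hO)).image u).subset <| by
      rintro _ ⟨⟨k, rfl⟩, hk⟩
      exact ⟨k, hk, rfl⟩
  have hinf : (range u).Infinite := fun h =>
    have ⟨k, hk⟩ := (hu.eventually_mem <| h.isClosed.isOpen_compl.mem_nhds
      fun ⟨k, hk⟩ => hne k hk).exists
    hk (mem_range_self k)
  set e := hinf.natEmbedding
  have he : Injective ((↑) ∘ e : ℕ → X) := Subtype.val_injective.comp e.injective
  refine ⟨(↑) ∘ e, fun O hO => eventually_cofinite.2 ?_, he, range_subset_iff.2 fun k => (e k).2⟩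
  exact ((hfin O hO).preimage he.injOn).subset fun k hk => ⟨(e k).2, hk⟩

namespace Topology.IsCoherentWith

variable {X : Type*} [TopologicalSpace X] {S : Set (Set X)}

theorem isClosed_of_forall_isClosed_inter (hS : IsCoherentWith S) {A : Set X}
    (h : ∀ s ∈ S, IsClosed (A ∩ s)) : IsClosed A :=
  hS.isClosed_iff.2 fun s hs => by
    rw [← Subtype.preimage_coe_inter_self]
    exact (h s hs).preimage continuous_subtype_val

protected theorem sequentialSpace (hS : IsCoherentWith S) (h : ∀ s ∈ S, SequentialSpace s) :
    SequentialSpace X :=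
  ⟨fun _ hA => hS.isClosed_iff.2 fun s hs =>
    have := h s hs
    (hA.preimage continuous_subtype_val.seqContinuous).isClosed⟩

theorem of_forall_exists_nhds (h : ∀ x : X, ∃ U ∈ 𝓝 x, IsCoherentWith {t : Set U | (↑) '' t ∈ S}) :
    IsCoherentWith S :=
  of_continuous_prop fun f hf => continuous_iff_continuousAt.2 fun x => by
    obtain ⟨U, hU, hUS⟩ := h x
    refine (continuousOn_iff_continuous_domRestrict.2 <| hUS.continuous_iff.2 fun t ht => ?_)
      |>.continuousAt hU
    exact (hf _ ht).comp continuous_subtype_val.continuousOn (mapsTo_image _ _)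

end Topology.IsCoherentWith

structure IsKOmegaSequence {X : Type*} [TopologicalSpace X] (D : ℕ → Set X) : Prop where
  monotone : Monotone D
  isCompact : ∀ m, IsCompact (D m)
  iUnion_eq : ⋃ m, D m = univ
  isCoherentWith : IsCoherentWith (range D)

namespace IsKOmegaSequence

variable {X : Type*} [TopologicalSpace X] {D : ℕ → Set X} {x : ℕ → ℕ → X}

theorem accumulate {E : ℕ → Set X} (hE : ∀ n, IsCompact (E n)) (hcover : ⋃ n, E n = univ)
    (hcoh : IsCoherentWith (range E)) : IsKOmegaSequence (accumulate E) where
  monotone := monotone_accumulate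
  isCompact := isCompact_accumulate hE
  iUnion_eq := iUnion_accumulate.trans hcover
  isCoherentWith := hcoh.enlarge <| forall_mem_range.2 fun n =>
    ⟨_, mem_range_self n, subset_accumulate⟩

protected theorem insert (hD : IsKOmegaSequence D) (a : X) :
    IsKOmegaSequence fun m => insert a (D m) where
  monotone _ _ h := insert_subset_insert (hD.monotone h)
  isCompact m := (hD.isCompact m).insert a
  iUnion_eq := eq_univ_of_subset (iUnion_mono fun _ => subset_insert _ _) hD.iUnion_eq
  isCoherentWith := hD.isCoherentWith.enlarge <| forall_mem_range.2 fun m =>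
    ⟨_, mem_range_self m, subset_insert _ _⟩

theorem sequentialSpace [T2Space X] [Countable X] (hD : IsKOmegaSequence D) :
    SequentialSpace X :=
  hD.isCoherentWith.sequentialSpace <| forall_mem_range.2 fun m =>
    have := (hD.isCompact m).firstCountableTopology
    inferInstance

/-- A sequence `z m ∈ K \ D m` has a cluster point `p ∈ D m₀`; its terms other than `p`
with index `≥ m₀` meet each `D m` in a finite set, so they form a closed set avoiding `p`. -/
theorem exists_subset_of_isCompact [T1Space X] (hD : IsKOmegaSequence D) {K : Set X}
    (hK : IsCompact K) : ∃ m, K ⊆ D m := by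
  by_contra! hc
  choose z hzK hzD using fun m => not_subset.1 (hc m)
  obtain ⟨p, -, hp⟩ := hK.exists_mapClusterPt_of_frequently (l := atTop) (.of_forall hzK)
  obtain ⟨m₀, hpD⟩ := mem_iUnion.1 (hD.iUnion_eq ▸ mem_univ p)
  set S := z '' Ici m₀ \ {p}
  have hlt {j m : ℕ} (h : z j ∈ D m) : j < m :=
    not_le.1 fun hmj => hzD j (hD.monotone hmj h)
  have hS : IsClosed S := hD.isCoherentWith.isClosed_of_forall_isClosed_inter <|
    forall_mem_range.2 fun m => Set.Finite.isClosed <| ((finite_Iio m).image z).subset <| by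
      rintro _ ⟨⟨⟨j, -, rfl⟩, -⟩, hj⟩
      exact ⟨j, hlt hj, rfl⟩
  obtain ⟨j, hjS, hj⟩ := (hp.frequently (hS.isOpen_compl.mem_nhds fun h => h.2 rfl)).and_eventually
      (eventually_ge_atTop m₀) |>.exists
  have : z j = p := by_contra fun h => hjS ⟨⟨j, hj, rfl⟩, h⟩
  exact hzD j (hD.monotone hj (this ▸ hpD))

theorem iUnion_image_inter_subset (hD : IsKOmegaSequence D) (hxD : ∀ j i, x j i ∉ D j)
    (s : ℕ → Set ℕ) (m : ℕ) : (⋃ j, x j '' s j) ∩ D m ⊆ ⋃ j < m, x j '' s j := by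
  rintro _ ⟨hy, hyD⟩
  obtain ⟨j, i, hi, rfl⟩ := mem_iUnion.1 hy
  exact mem_biUnion (not_le.1 fun h => hxD j i (hD.monotone h hyD)) (mem_image_of_mem _ hi)

theorem isClosed_iUnion_image [T1Space X] (hD : IsKOmegaSequence D) (hxD : ∀ j i, x j i ∉ D j)
    {s : ℕ → Set ℕ} (hs : ∀ j, (s j).Finite) : IsClosed (⋃ j, x j '' s j) :=
  hD.isCoherentWith.isClosed_of_forall_isClosed_inter <| forall_mem_range.2 fun m =>
    (((finite_Iio m).biUnion fun j _ => (hs j).image (x j)).subset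
      (hD.iUnion_image_inter_subset hxD s m)).isClosed

theorem isClosed_insert_iUnion_image [T2Space X] (hD : IsKOmegaSequence D) {a : X}
    (hx : ∀ j, Tendsto (x j) atTop (𝓝 a)) (hxD : ∀ j i, x j i ∉ D j) (s : ℕ → Set ℕ) :
    IsClosed (insert a (⋃ j, x j '' s j)) := by
  refine hD.isCoherentWith.isClosed_of_forall_isClosed_inter <| forall_mem_range.2 fun m => ?_
  have hcompact : IsCompact (insert a (⋃ j < m, x j '' s j)) := by
    convert (isCompact_singleton (x := a)).union ((finite_Iio m).isCompact_biUnion fun j _ =>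
      (hx j).isCompact_insert_image (s j)) using 1
    ext
    simp only [mem_insert_iff, mem_iUnion, mem_singleton_iff, mem_union]
    grind
  convert (hcompact.inter_right (hD.isCompact m).isClosed).isClosed using 1
  refine Subset.antisymm (fun y ⟨hy, hyD⟩ => ⟨?_, hyD⟩)
    (inter_subset_inter_left _ (insert_subset_insert (iUnion₂_subset fun j _ =>
      subset_iUnion (fun j => x j '' s j) j)))
  rcases hy with rfl | hy
  exacts [mem_insert _ _, mem_insert_of_mem _ (hD.iUnion_image_inter_subset hxD s m ⟨hy, hyD⟩)]

/-- The `j`-th sequence escapes `D (M j)`, and `M (j + 1)` is chosen so that `D (M (j + 1))`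
contains it; this makes the sequences pairwise disjoint. -/
theorem exists_fan [T1Space X] (hD : IsKOmegaSequence D) {a : X}
    (hesc : ∀ m, ∃ v : ℕ → X, Tendsto v atTop (𝓝 a) ∧ Injective v ∧ ∀ k, v k ∉ D m) :
    ∃ x : ℕ → ℕ → X, (∀ j, Tendsto (x j) atTop (𝓝 a)) ∧ Injective (uncurry x) ∧
      ∀ j i, x j i ∉ D j := by
  choose v hv hvinj hvD using hesc
  choose bound hbound using fun m => hD.exists_subset_of_isCompact (hv m).isCompact_insert_range
  set M : ℕ → ℕ := fun j => Nat.rec 0 (fun _ Mj => max (bound Mj) Mj + 1) j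
  have hMsucc (j : ℕ) : M (j + 1) = max (bound (M j)) (M j) + 1 := rfl
  have hM : StrictMono M := strictMono_nat_of_lt_succ fun j => by rw [hMsucc]; omega
  have hmem (j i : ℕ) : v (M j) i ∈ D (M (j + 1)) :=
    hD.monotone (by rw [hMsucc]; omega) (hbound _ (mem_insert_of_mem _ (mem_range_self i)))
  have hdisj {j j' : ℕ} (h : j < j') (i i' : ℕ) : v (M j) i ≠ v (M j') i' := fun heq =>
    hvD _ i' (heq ▸ hD.monotone (hM.monotone h) (hmem j i))
  refine ⟨fun j => v (M j), fun j => hv _, ?_, fun j i h => hvD _ i (hD.monotone hM.le_apply h)⟩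
  rintro ⟨j, i⟩ ⟨j', i'⟩ (heq : v (M j) i = v (M j') i')
  rcases lt_trichotomy j j' with h | rfl | h
  · exact absurd heq (hdisj h i i')
  · rw [hvinj _ heq]
  · exact absurd heq.symm (hdisj h i' i)

end IsKOmegaSequence

theorem IsKOmegaSpace.exists_isKOmegaSequence {X : Type*} [TopologicalSpace X]
    (h : IsKOmegaSpace X) : ∃ D : ℕ → Set X, IsKOmegaSequence D := by
  obtain ⟨K, tK, hK, f, hf⟩ := h
  let := tK
  have hfn (n : ℕ) : Continuous (f ∘ Sigma.mk n) := hf.continuous.comp continuous_sigmaMk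
  refine ⟨_, .accumulate (E := fun n => range (f ∘ Sigma.mk n))
    (fun n => isCompact_range (hfn n)) ?_ (.of_isClosed fun A hA => ?_)⟩
  · refine eq_univ_of_forall fun x => ?_
    obtain ⟨⟨n, k⟩, rfl⟩ := hf.surjective x
    exact mem_iUnion.2 ⟨n, k, rfl⟩
  · refine hf.isClosed_preimage.1 <| isClosed_sigma_iff.2 fun n => ?_
    exact (hA _ (mem_range_self n)).preimage (hfn n).rangeFactorization

theorem exists_isKOmegaSequence_of_forall_exists_nhds {X : Type*} [TopologicalSpace X]
    [Countable X] [Nonempty X] (h : ∀ x : X, ∃ U ∈ 𝓝 x, IsKOmegaSpace U) :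
    ∃ D : ℕ → Set X, IsKOmegaSequence D := by
  choose U hU hUk using h
  choose D hD using fun x => (hUk x).exists_isKOmegaSequence
  set E : X × ℕ → Set X := fun p => (↑) '' D p.1 p.2
  obtain ⟨σ, hσ⟩ := exists_surjective_nat (X × ℕ)
  refine ⟨_, .accumulate (E := E ∘ σ) (fun n => ((hD _).isCompact _).image continuous_subtype_val)
    ?_ ?_⟩
  · refine eq_univ_of_forall fun x => ?_
    obtain ⟨n, hn⟩ := mem_iUnion.1 <|
      (hD x).iUnion_eq ▸ mem_univ (⟨x, mem_of_mem_nhds (hU x)⟩ : U x)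
    obtain ⟨k, hk⟩ := hσ (x, n)
    exact mem_iUnion.2 ⟨k, by rw [Function.comp_apply, hk]; exact ⟨_, hn, rfl⟩⟩
  · rw [hσ.range_comp]
    refine .of_forall_exists_nhds fun x => ⟨U x, hU x, (hD x).isCoherentWith.mono ?_⟩
    rintro _ ⟨n, rfl⟩
    exact ⟨(x, n), rfl⟩

namespace SOmega

open OnePoint

def vertex : SOmega := Quotient.mk _ (0, ∞)

def pt (j i : ℕ) : SOmega := Quotient.mk _ (j, (i : OnePoint ℕ))

theorem mk_infty (j : ℕ) : Quotient.mk SOmegaSetoid (j, ∞) = vertex :=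
  Quotient.sound (Or.inr ⟨rfl, rfl⟩)

theorem eq_vertex_or_exists_eq_pt (q : SOmega) : q = vertex ∨ ∃ j i, q = pt j i := by
  induction q using Quotient.ind with
  | _ p =>
    obtain ⟨j, _ | i⟩ := p
    exacts [Or.inl (mk_infty j), Or.inr ⟨j, i, rfl⟩]

theorem finite_setOf_pt_mem {Z : Set SOmega} (hZ : IsClosed Z) (hv : vertex ∉ Z) (j : ℕ) :
    {i | pt j i ∈ Z}.Finite := by
  have hslice : IsClosed {w : OnePoint ℕ | Quotient.mk SOmegaSetoid (j, w) ∈ Z} :=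
    hZ.preimage (continuous_quotient_mk'.comp (Continuous.prodMk_right j))
  rw [isClosed_iff_of_notMem fun h => hv (mk_infty j ▸ h)] at hslice
  exact hslice.2.finite_of_discrete

variable {X : Type*} {a : X} {x : ℕ → ℕ → X}

def lift (a : X) (x : ℕ → ℕ → X) : SOmega → X :=
  Quotient.lift (fun p => p.2.elim a (x p.1)) <| by
    rintro p q (rfl | ⟨hp, hq⟩)
    · rfl
    · simp only [hp, hq, OnePoint.elim_infty]

theorem image_lift (Z : Set SOmega) :
    lift a x '' Z = {y | vertex ∈ Z ∧ y = a} ∪ ⋃ j, x j '' {i | pt j i ∈ Z} := by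
  ext y
  simp only [mem_image, mem_union, mem_ofPred_eq, mem_iUnion]
  constructor
  · rintro ⟨q, hq, rfl⟩
    rcases eq_vertex_or_exists_eq_pt q with rfl | ⟨j, i, rfl⟩
    exacts [Or.inl ⟨hq, rfl⟩, Or.inr ⟨j, i, hq, rfl⟩]
  · rintro (⟨hv, rfl⟩ | ⟨j, i, hi, rfl⟩)
    exacts [⟨_, hv, rfl⟩, ⟨_, hi, rfl⟩]

variable [TopologicalSpace X]

theorem continuous_lift (hx : ∀ j, Tendsto (x j) atTop (𝓝 a)) : Continuous (lift a x) :=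
  Continuous.quotient_lift (continuous_prod_of_discrete_left.2 fun j =>
    (OnePoint.continuous_iff_from_nat _).2 (hx j)) _

theorem isClosedEmbedding_lift (hx : ∀ j, Tendsto (x j) atTop (𝓝 a))
    (hinj : Injective (uncurry x)) (hne : ∀ j i, x j i ≠ a)
    (hclosed : ∀ s : ℕ → Set ℕ, IsClosed (insert a (⋃ j, x j '' s j)))
    (hclosed_finite : ∀ s : ℕ → Set ℕ, (∀ j, (s j).Finite) → IsClosed (⋃ j, x j '' s j)) :
    IsClosedEmbedding (lift a x) := by
  refine .of_continuous_injective_isClosedMap (continuous_lift hx) ?_ fun Z hZ => ?_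
  · intro q q' h
    rcases eq_vertex_or_exists_eq_pt q with rfl | ⟨j, i, rfl⟩ <;>
      rcases eq_vertex_or_exists_eq_pt q' with rfl | ⟨j', i', rfl⟩
    · rfl
    · exact absurd h.symm (hne j' i')
    · exact absurd h (hne j i)
    · cases hinj (a₁ := (j, i)) (a₂ := (j', i')) h
      rfl
  · rw [image_lift]
    by_cases hv : vertex ∈ Z
    · simpa only [hv, true_and, ofPred_eq_eq_singleton, singleton_union] using hclosed _
    · simpa only [hv, false_and, ofPred_false, empty_union] using
        hclosed_finite _ (finite_setOf_pt_mem hZ hv)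

end SOmega

section ParatopologicalGroup

open scoped Pointwise

variable {G : Type*} [Group G] [TopologicalSpace G] [ContinuousMul G]

/-- Translates of `K` make `G` locally compact, hence a Baire space, so the countably many
closed singletons cannot all have empty interior. -/
theorem exists_isOpen_singleton_of_isCompact_mem_nhds [T2Space G] [Countable G] {K : Set G}
    {x : G} (hK : IsCompact K) (hKx : K ∈ 𝓝 x) : ∃ y : G, IsOpen {y} := by
  have : WeaklyLocallyCompactSpace G := ⟨fun y => ⟨(y * x⁻¹) • K, hK.smul _, by
    rw [← preimage_smul_inv]
    exact (continuous_const_smul _).continuousAt.preimage_mem_nhds (by simpa using hKx)⟩⟩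
  obtain ⟨y, hy⟩ := nonempty_interior_of_iUnion_of_closed (fun y : G => isClosed_singleton)
    (iUnion_of_singleton G)
  exact ⟨y, hy.subset_singleton_iff.1 interior_subset ▸ isOpen_interior⟩

/-- If `w k ∈ seqClosure Kᶜ` tends to `g`, with `v k i → w k` in `Kᶜ`, choose `i k` such that
`(w k)⁻¹ * v k (i k)` lies in `K` and tends to `1`; then `v k (i k) → g`. Hence
`seqClosure Kᶜ` is closed, and contains `1` unless `K ∈ 𝓝 1`. -/
theorem mem_nhds_one_of_forall_tendsto_eventually_mem [SequentialSpace G] {K : Set G}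
    [(𝓝[K] (1 : G)).IsCountablyGenerated]
    (hK : ∀ u : ℕ → G, Tendsto u atTop (𝓝 1) → ∀ᶠ k in atTop, u k ∈ K) : K ∈ 𝓝 1 := by
  obtain ⟨N, hN⟩ := (𝓝[K] (1 : G)).exists_antitone_basis
  have hclosed : IsClosed (seqClosure Kᶜ) := IsSeqClosed.isClosed fun w g hw hwg => by
    choose v hvK hv using hw
    have hv1 (k : ℕ) : Tendsto (fun i => (w k)⁻¹ * v k i) atTop (𝓝 1) := by
      simpa using (hv k).const_mul (w k)⁻¹
    choose i hi using fun k =>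
      ((tendsto_nhdsWithin_iff.2 ⟨hv1 k, hK _ (hv1 k)⟩).eventually_mem (hN.mem k)).exists
    refine ⟨fun k => v k (i k), fun k => hvK k _, ?_⟩
    simpa using hwg.mul ((hN.tendsto hi).mono_right nhdsWithin_le_nhds)
  by_contra hK1
  have h1 : (1 : G) ∈ closure Kᶜ := by
    rwa [closure_compl, mem_compl_iff, mem_interior_iff_mem_nhds]
  obtain ⟨u, huK, hu⟩ := closure_minimal subset_seqClosure hclosed h1
  obtain ⟨k, hk⟩ := (hK u hu).exists
  exact huK k hk

theorem exists_injective_tendsto_one_forall_notMem [T1Space G] [SequentialSpace G] {K : Set G}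
    [(𝓝[K] (1 : G)).IsCountablyGenerated] (h1 : (1 : G) ∈ K) (hK : K ∉ 𝓝 1) :
    ∃ v : ℕ → G, Tendsto v atTop (𝓝 1) ∧ Injective v ∧ ∀ k, v k ∉ K := by
  obtain ⟨u, hu, hfreq⟩ : ∃ u : ℕ → G, Tendsto u atTop (𝓝 1) ∧ ∃ᶠ k in atTop, u k ∉ K := by
    by_contra! h
    exact hK (mem_nhds_one_of_forall_tendsto_eventually_mem h)
  obtain ⟨φ, hφ, hφK⟩ := extraction_of_frequently_atTop hfreq
  obtain ⟨v, hv, hvinj, hvu⟩ :=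
    (hu.comp hφ.tendsto_atTop).exists_injective_tendsto fun k (h : u (φ k) = 1) => hφK k (h ▸ h1)
  refine ⟨v, hv, hvinj, fun k => ?_⟩
  obtain ⟨j, hj⟩ := hvu (mem_range_self k)
  exact hj ▸ hφK j

end ParatopologicalGroup

/-- Let `G` be a regular T1 countable paratopological group which is locally `kω`
(every point has a neighborhood which, as a subspace, is a `kω`-space). Then either
`G` is a discrete topological group, or `G` contains a closed subspace homeomorphic
to `Sω`. -/
theorem countable_locally_kOmega_paratopological_group_discrete_or_SOmega
    {G : Type} [Group G] [TopologicalSpace G] [ContinuousMul G]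
    [RegularSpace G] [T1Space G] [Countable G]
    (hloc : ∀ x : G, ∃ U ∈ 𝓝 x, IsKOmegaSpace ↥U) :
    (DiscreteTopology G ∧ IsTopologicalGroup G) ∨
      ∃ C : Set G, IsClosed C ∧ Nonempty (C ≃ₜ SOmega) := by
  by_cases hiso : ∃ w : G, IsOpen ({w} : Set G)
  · obtain ⟨w, hw⟩ := hiso
    have := (MulAction.IsPretransitive.discreteTopology_iff G w).2 hw
    exact Or.inl ⟨this, inferInstance⟩
  obtain ⟨D₀, hD₀⟩ := exists_isKOmegaSequence_of_forall_exists_nhds hloc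
  have hD := hD₀.insert 1
  have := hD.sequentialSpace
  have hesc (m : ℕ) :
      ∃ v : ℕ → G, Tendsto v atTop (𝓝 1) ∧ Injective v ∧ ∀ k, v k ∉ insert 1 (D₀ m) := by
    have := (hD.isCompact m).isCountablyGenerated_nhdsWithin 1
    exact exists_injective_tendsto_one_forall_notMem (mem_insert _ _) fun h =>
      hiso (exists_isOpen_singleton_of_isCompact_mem_nhds (hD.isCompact m) h)
  obtain ⟨x, hx, hinj, hxD⟩ := hD.exists_fan hesc
  have hlift := SOmega.isClosedEmbedding_lift hx hinj (fun j i h => hxD j i (h ▸ mem_insert _ _))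
    (hD.isClosed_insert_iUnion_image hx hxD) fun _ => hD.isClosed_iUnion_image hxD
  exact Or.inr ⟨_, hlift.isClosed_range, ⟨hlift.isEmbedding.toHomeomorph.symm⟩⟩
end
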